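/- arXiv:1604.00733 — 6 statements merged into one kernel-verified Lean document; each statement's English description precedes it below -/
import Mathlib

section
/- Let X and Y be nonempty vertex subsets of a graph G, let δ > 0, and let k be a positive integer with k ≤ |X| and k ≤ |Y|. Then the number of pairs (X', Y') with X' ⊆ X, Y' ⊆ Y, |X'| = |Y'| = k and |d(X',Y') − d(X,Y)| < δ is at least (1 − 2·e^{−δ²k/4})·C(|X|,k)·C(|Y|,k), where C(n,k) denotes the binomial coefficient. Equivalently, if X' ⊆ X and Y' ⊆ Y are chosen uniformly at random subject to |X'| = |Y'| = k, then ℙ(|d(X',Y') − d(X,Y)| < δ) ≥ 1 − 2·e^{−δ²k/4}. -/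
/-!
Write `d(X', Y') - d(X, Y)` as `(d(X', Y) - d(X, Y)) + (d(X', Y') - d(X', Y))`. Both terms are
deviations of the mean of `[0, 1]`-valued weights (normalised degrees, `dens G {x} Y`) over a
uniformly random `k`-subset from the mean over the whole set. By Maclaurin's inequality the
moment generating function of such a mean is at most that of sampling with replacement, so
Hoeffding's lemma and Markov's inequality bound each deviation beyond `δ / 2` by `2 e^{-δ²k/2}`.
The union bound leaves at most a `4 e^{-δ²k/2} ≤ 2 e^{-δ²k/4}` fraction of bad pairs whenever the
claimed bound is not trivially nonpositive.
-/

open Finset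

variable {V : Type*} [Fintype V] [DecidableEq V]

/-- Number of ordered pairs `(x,y) ∈ X × Y` that are edges of `G`. -/
def epairs (G : SimpleGraph V) [DecidableRel G.Adj] (X Y : Finset V) : ℕ :=
  ((X ×ˢ Y).filter fun p => G.Adj p.1 p.2).card

/-- Edge density between `X` and `Y`. -/
noncomputable def dens (G : SimpleGraph V) [DecidableRel G.Adj] (X Y : Finset V) : ℝ :=
  (epairs G X Y : ℝ) / ((X.card : ℝ) * (Y.card : ℝ))

open Real
open scoped BigOperators

theorem pow_add_mul_sub_le_pow {R : Type*} [CommRing R] [LinearOrder R] [IsStrictOrderedRing R]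
    {x y : R} (hx : 0 ≤ x) (hy : 0 ≤ y) (n : ℕ) :
    x ^ (n + 1) + (n + 1) * x ^ n * (y - x) ≤ y ^ (n + 1) := by
  induction n with
  | zero => simp
  | succ n ih =>
    have h := mul_le_mul_of_nonneg_left ih hy
    have hsq : 0 ≤ (n + 1) * x ^ n * (y - x) ^ 2 := by positivity
    rw [pow_succ y (n + 1), pow_succ x (n + 1), pow_succ x n] at *
    push_cast
    nlinarith

theorem Multiset.esymm_cons_succ {R : Type*} [CommSemiring R] (a : R) (s : Multiset R) (k : ℕ) :
    (a ::ₘ s).esymm (k + 1) = s.esymm (k + 1) + a * s.esymm k := by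
  simp [Multiset.esymm, Multiset.powersetCard_cons, Multiset.sum_map_mul_left]

/-- **Maclaurin's inequality**. -/
theorem Multiset.esymm_le_choose_mul_pow {R : Type*} [Field R] [LinearOrder R]
    [IsStrictOrderedRing R] {s : Multiset R} (hs : ∀ x ∈ s, 0 ≤ x) (k : ℕ) :
    s.esymm k ≤ s.card.choose k * (s.sum / s.card) ^ k := by
  induction s using Multiset.induction_on generalizing k with
  | empty => cases k <;> simp [Multiset.esymm, Multiset.powersetCard_zero_right]
  | cons a s ih =>
    cases k with
    | zero => simp [Multiset.esymm]
    | succ k =>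
      have ha : 0 ≤ a := hs a (Multiset.mem_cons_self a s)
      have hs' : ∀ x ∈ s, 0 ≤ x := fun x hx => hs x (Multiset.mem_cons_of_mem hx)
      set n := s.card
      set μ := s.sum / n
      set m := (a + s.sum) / (n + 1) with hm_def
      have hμ : 0 ≤ μ := div_nonneg (Multiset.sum_nonneg hs') n.cast_nonneg
      have hm : 0 ≤ m := div_nonneg (add_nonneg ha (Multiset.sum_nonneg hs')) (by positivity)
      have hnμ : n * μ = s.sum := by
        rcases eq_or_ne n 0 with hn | hn
        · simp [n, Multiset.card_eq_zero.mp hn]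
        · exact mul_div_cancel₀ _ (by exact_mod_cast hn)
      have hnm : (n + 1) * m = a + s.sum := mul_div_cancel₀ _ (by positivity)
      have hpascal : ((n + 1).choose (k + 1) : R) = n.choose (k + 1) + n.choose k := by
        push_cast [Nat.choose_succ_succ']; ring
      have habsorb : ((n + 1).choose (k + 1) : R) * (k + 1) = (n + 1) * n.choose k := by
        exact_mod_cast (Nat.add_one_mul_choose_eq n k).symm
      clear_value μ m
      calc (a ::ₘ s).esymm (k + 1) = s.esymm (k + 1) + a * s.esymm k :=
            Multiset.esymm_cons_succ a s k
        _ ≤ n.choose (k + 1) * μ ^ (k + 1) + a * (n.choose k * μ ^ k) :=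
            add_le_add (ih hs' _) (mul_le_mul_of_nonneg_left (ih hs' _) ha)
        _ = (n + 1).choose (k + 1) * (μ ^ (k + 1) + (k + 1) * μ ^ k * (m - μ)) := by
            linear_combination -μ ^ (k + 1) * hpascal - μ ^ k * (m - μ) * habsorb
              - n.choose k * μ ^ k * hnm + n.choose k * μ ^ k * hnμ
        _ ≤ (n + 1).choose (k + 1) * m ^ (k + 1) :=
            mul_le_mul_of_nonneg_left (pow_add_mul_sub_le_pow hμ hm k) (Nat.cast_nonneg _)
        _ = _ := by simp [hm_def, n]

theorem Finset.sum_powersetCard_prod_le_choose_mul_pow {R ι : Type*} [Field R] [LinearOrder R]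
    [IsStrictOrderedRing R] (s : Finset ι) {b : ι → R} (hb : ∀ i ∈ s, 0 ≤ b i) (k : ℕ) :
    ∑ t ∈ s.powersetCard k, ∏ i ∈ t, b i ≤ (#s).choose k * (𝔼 i ∈ s, b i) ^ k := by
  have h := Multiset.esymm_le_choose_mul_pow (s := s.val.map b) (by simpa using hb) k
  rwa [Finset.esymm_map_val, Multiset.card_map, ← card_def, Finset.sum_map_val,
    ← expect_eq_sum_div_card] at h

/-- **Hoeffding's lemma** for the uniform distribution on a finite set. -/
theorem Finset.expect_exp_mul_sub_expect_le {ι : Type*} (s : Finset ι) {a : ι → ℝ}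
    (ha : ∀ i ∈ s, a i ∈ Set.Icc (0 : ℝ) 1) (t : ℝ) :
    𝔼 i ∈ s, exp (t * (a i - 𝔼 j ∈ s, a j)) ≤ exp (t ^ 2 / 8) := by
  rcases s.eq_empty_or_nonempty with rfl | hs
  · simp only [expect_empty]; positivity
  have : Nonempty s := hs.to_subtype
  let _ : MeasurableSpace s := ⊤
  let μ := (PMF.uniformOfFintype s).toMeasure
  have hμ (f : ι → ℝ) : ∫ i : s, f i ∂μ = 𝔼 i ∈ s, f i := by
    rw [PMF.integral_eq_sum, expect_eq_sum_div_card, sum_div, ← sum_coe_sort s]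
    simp [PMF.uniformOfFintype_apply, div_eq_inv_mul]
  have h := (ProbabilityTheory.hasSubgaussianMGF_of_mem_Icc (μ := μ) (X := fun i : s => a i)
    (a := 0) (b := 1) Measurable.of_discrete.aemeasurable
    (Filter.Eventually.of_forall fun i => ha i i.2)).mgf_le t
  rw [ProbabilityTheory.mgf, hμ, hμ fun i => exp (t * (a i - 𝔼 j ∈ s, a j))] at h
  exact h.trans_eq (by norm_num; ring_nf)

/-- Chernoff bound for the mean of `a` over a uniformly random `k`-subset of `s`: Markov's
inequality for `exp (l * ·)`, with Maclaurin's inequality comparing sampling without replacement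
to sampling with replacement. -/
theorem Finset.card_powersetCard_filter_le_exp {ι : Type*} (s : Finset ι) {a : ι → ℝ}
    (ha : ∀ i ∈ s, a i ∈ Set.Icc (0 : ℝ) 1) (k : ℕ) (l c : ℝ) :
    (#{t ∈ s.powersetCard k | c ≤ l * (𝔼 i ∈ t, a i - 𝔼 i ∈ s, a i)} : ℝ) ≤
      (#s).choose k * exp (k * (l ^ 2 / 8 - c)) := by
  set μ := 𝔼 i ∈ s, a i
  set b : ι → ℝ := fun i => exp (l * (a i - μ))
  have hprod : ∀ t ∈ s.powersetCard k, ∏ i ∈ t, b i = exp (k * (l * (𝔼 i ∈ t, a i - μ))) := by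
    intro t ht
    rw [← exp_sum, ← mul_sum, sum_sub_distrib, ← card_mul_expect, sum_const, nsmul_eq_mul,
      (mem_powersetCard.1 ht).2]
    ring_nf
  set bad := {t ∈ s.powersetCard k | c ≤ l * (𝔼 i ∈ t, a i - μ)}
  have hmarkov : #bad * exp (k * c) ≤ ∑ t ∈ s.powersetCard k, ∏ i ∈ t, b i := by
    calc #bad * exp (k * c) ≤ ∑ t ∈ bad, ∏ i ∈ t, b i := by
          rw [← nsmul_eq_mul]
          refine card_nsmul_le_sum _ _ _ fun t ht => ?_
          rw [mem_filter] at ht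
          rw [hprod t ht.1]
          gcongr
          exact ht.2
      _ ≤ _ := sum_le_sum_of_subset_of_nonneg (filter_subset _ _)
          fun t _ _ => prod_nonneg fun i _ => (exp_pos _).le
  have hmgf := Finset.expect_exp_mul_sub_expect_le s ha l
  have hmac := Finset.sum_powersetCard_prod_le_choose_mul_pow s (b := b) (fun i _ => (exp_pos _).le) k
  calc (#bad : ℝ) = #bad * exp (k * c) * exp (- (k * c)) := by rw [mul_assoc, ← exp_add]; simp
    _ ≤ (#s).choose k * exp (l ^ 2 / 8) ^ k * exp (- (k * c)) := by
        refine mul_le_mul_of_nonneg_right (hmarkov.trans (hmac.trans ?_)) (exp_pos _).le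
        exact mul_le_mul_of_nonneg_left
          (pow_le_pow_left₀ (expect_nonneg fun i _ => (exp_pos _).le) hmgf k) (Nat.cast_nonneg _)
    _ = _ := by rw [← exp_nat_mul, mul_assoc, ← exp_add]; ring_nf

theorem Finset.card_powersetCard_filter_abs_sub_expect_le {ι : Type*} (s : Finset ι) {a : ι → ℝ}
    (ha : ∀ i ∈ s, a i ∈ Set.Icc (0 : ℝ) 1) (k : ℕ) {ε : ℝ} (hε : 0 ≤ ε) :
    (#{t ∈ s.powersetCard k | ε ≤ |𝔼 i ∈ t, a i - 𝔼 i ∈ s, a i|} : ℝ) ≤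
      2 * exp (-2 * ε ^ 2 * k) * (#s).choose k := by
  classical
  set μ := 𝔼 i ∈ s, a i
  have hsub : {t ∈ s.powersetCard k | ε ≤ |𝔼 i ∈ t, a i - μ|} ⊆
      {t ∈ s.powersetCard k | 4 * ε ^ 2 ≤ 4 * ε * (𝔼 i ∈ t, a i - μ)} ∪
        {t ∈ s.powersetCard k | 4 * ε ^ 2 ≤ -(4 * ε) * (𝔼 i ∈ t, a i - μ)} := by
    intro t ht
    simp only [mem_union, mem_filter] at ht ⊢
    rcases le_abs'.1 ht.2 with h | h
    · right; exact ⟨ht.1, by nlinarith⟩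
    · left; exact ⟨ht.1, by nlinarith⟩
  calc (#{t ∈ s.powersetCard k | ε ≤ |𝔼 i ∈ t, a i - μ|} : ℝ)
      ≤ #{t ∈ s.powersetCard k | 4 * ε ^ 2 ≤ 4 * ε * (𝔼 i ∈ t, a i - μ)} +
          #{t ∈ s.powersetCard k | 4 * ε ^ 2 ≤ -(4 * ε) * (𝔼 i ∈ t, a i - μ)} := by
        exact_mod_cast (card_le_card hsub).trans (card_union_le _ _)
    _ ≤ (#s).choose k * exp (-2 * ε ^ 2 * k) + (#s).choose k * exp (-2 * ε ^ 2 * k) := by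
        gcongr
        · exact (card_powersetCard_filter_le_exp s ha k _ _).trans_eq (by ring_nf)
        · exact (card_powersetCard_filter_le_exp s ha k _ _).trans_eq (by ring_nf)
    _ = _ := by ring

theorem Finset.card_filter_product_eq_sum {α β : Type*} (s : Finset α) (t : Finset β)
    (P : α × β → Prop) [DecidablePred P] :
    #{z ∈ s ×ˢ t | P z} = ∑ x ∈ s, #{y ∈ t | P (x, y)} := by
  simp only [card_filter, sum_product]

theorem Finset.card_filter_product_le_of_abs_sub_le {α β : Type*} {s : Finset α} {t : Finset β}
    {f : α → ℝ} {g : α → β → ℝ} {c δ₁ δ₂ p q : ℝ}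
    (hf : (#{x ∈ s | δ₁ ≤ |f x - c|} : ℝ) ≤ p * #s)
    (hg : ∀ x ∈ s, (#{y ∈ t | δ₂ ≤ |g x y - f x|} : ℝ) ≤ q * #t) :
    (#{z ∈ s ×ˢ t | δ₁ + δ₂ ≤ |g z.1 z.2 - c|} : ℝ) ≤ (p + q) * (#s * #t) := by
  classical
  have hsub : {z ∈ s ×ˢ t | δ₁ + δ₂ ≤ |g z.1 z.2 - c|} ⊆
      {z ∈ s ×ˢ t | δ₁ ≤ |f z.1 - c|} ∪ {z ∈ s ×ˢ t | δ₂ ≤ |g z.1 z.2 - f z.1|} := by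
    intro z hz
    simp only [mem_union, mem_filter] at hz ⊢
    by_contra! h
    have := abs_sub_le (g z.1 z.2) (f z.1) c
    linarith [h.1 hz.1, h.2 hz.1]
  have hfirst : (#{z ∈ s ×ˢ t | δ₁ ≤ |f z.1 - c|} : ℝ) ≤ p * #s * #t := by
    rw [filter_product_left (fun x => δ₁ ≤ |f x - c|), card_product, Nat.cast_mul]
    gcongr
  have hsecond : (#{z ∈ s ×ˢ t | δ₂ ≤ |g z.1 z.2 - f z.1|} : ℝ) ≤ #s * (q * #t) := by
    rw [card_filter_product_eq_sum, Nat.cast_sum]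
    exact (sum_le_sum hg).trans_eq (by rw [sum_const, nsmul_eq_mul])
  calc (#{z ∈ s ×ˢ t | δ₁ + δ₂ ≤ |g z.1 z.2 - c|} : ℝ)
      ≤ #{z ∈ s ×ˢ t | δ₁ ≤ |f z.1 - c|} + #{z ∈ s ×ˢ t | δ₂ ≤ |g z.1 z.2 - f z.1|} := by
        exact_mod_cast (card_le_card hsub).trans (card_union_le _ _)
    _ ≤ (p + q) * (#s * #t) := by linarith

theorem epairs_eq_sum {V : Type*} (G : SimpleGraph V) [DecidableRel G.Adj] (X Y : Finset V) :
    epairs G X Y = ∑ x ∈ X, ∑ y ∈ Y, if G.Adj x y then 1 else 0 := by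
  rw [epairs, card_filter, sum_product]

theorem epairs_comm {V : Type*} (G : SimpleGraph V) [DecidableRel G.Adj] (X Y : Finset V) :
    epairs G X Y = epairs G Y X := by
  rw [epairs_eq_sum, epairs_eq_sum, sum_comm]
  simp only [G.adj_comm]

theorem dens_comm {V : Type*} (G : SimpleGraph V) [DecidableRel G.Adj] (X Y : Finset V) :
    dens G X Y = dens G Y X := by
  rw [_root_.dens, _root_.dens, epairs_comm, mul_comm]

theorem dens_nonneg {V : Type*} (G : SimpleGraph V) [DecidableRel G.Adj] (X Y : Finset V) :
    0 ≤ dens G X Y := by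
  unfold _root_.dens; positivity

theorem dens_le_one {V : Type*} (G : SimpleGraph V) [DecidableRel G.Adj] (X Y : Finset V) :
    dens G X Y ≤ 1 := by
  refine div_le_one_of_le₀ ?_ (by positivity)
  exact_mod_cast (card_filter_le _ _).trans (card_product X Y).le

theorem dens_eq_expect_dens_singleton {V : Type*} (G : SimpleGraph V) [DecidableRel G.Adj]
    (X Y : Finset V) : dens G X Y = 𝔼 x ∈ X, dens G {x} Y := by
  simp only [_root_.dens, epairs_eq_sum, expect_eq_sum_div_card, sum_singleton, card_singleton,
    Nat.cast_sum, Nat.cast_one, mul_one, ← sum_div, div_div, mul_comm]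

theorem card_powersetCard_filter_abs_dens_sub_dens_le_left {V : Type*} (G : SimpleGraph V)
    [DecidableRel G.Adj] (X Y : Finset V) (k : ℕ) {ε : ℝ} (hε : 0 ≤ ε) :
    (#{S ∈ X.powersetCard k | ε ≤ |dens G S Y - dens G X Y|} : ℝ) ≤
      2 * exp (-2 * ε ^ 2 * k) * #(X.powersetCard k) := by
  have h := card_powersetCard_filter_abs_sub_expect_le X (a := fun x => dens G {x} Y)
    (fun x _ => ⟨dens_nonneg G _ _, dens_le_one G _ _⟩) k hε
  simpa only [← dens_eq_expect_dens_singleton, card_powersetCard] using h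

theorem card_powersetCard_filter_abs_dens_sub_dens_le_right {V : Type*} (G : SimpleGraph V)
    [DecidableRel G.Adj] (X Y : Finset V) (k : ℕ) {ε : ℝ} (hε : 0 ≤ ε) :
    (#{T ∈ Y.powersetCard k | ε ≤ |dens G X T - dens G X Y|} : ℝ) ≤
      2 * exp (-2 * ε ^ 2 * k) * #(Y.powersetCard k) := by
  simpa only [dens_comm G X] using card_powersetCard_filter_abs_dens_sub_dens_le_left G Y X k hε

open scoped Classical in
theorem density_preserved_by_random_subsets_general (G : SimpleGraph V) [DecidableRel G.Adj]
    (X Y : Finset V) (δ : ℝ) (hδ : 0 < δ) (k : ℕ) :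
    (1 - 2 * Real.exp (-δ ^ 2 * k / 4)) * (X.card.choose k : ℝ) * (Y.card.choose k : ℝ) ≤
      (((X.powersetCard k ×ˢ Y.powersetCard k).filter fun p =>
          |dens G p.1 p.2 - dens G X Y| < δ).card : ℝ) := by
  set E := exp (-δ ^ 2 * k / 4)
  set T := X.powersetCard k ×ˢ Y.powersetCard k
  have hE : exp (-2 * (δ / 2) ^ 2 * k) = E ^ 2 := by
    rw [← exp_nat_mul]; ring_nf
  have hbad : (#{z ∈ T | δ ≤ |dens G z.1 z.2 - dens G X Y|} : ℝ) ≤ 4 * E ^ 2 * #T := by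
    have h := card_filter_product_le_of_abs_sub_le
      (card_powersetCard_filter_abs_dens_sub_dens_le_left G X Y k (half_pos hδ).le)
      fun S _ => card_powersetCard_filter_abs_dens_sub_dens_le_right G S Y k (half_pos hδ).le
    rw [add_halves, hE] at h
    rw [card_product, Nat.cast_mul]
    linarith
  have hsplit : (#{z ∈ T | |dens G z.1 z.2 - dens G X Y| < δ} : ℝ) +
      #{z ∈ T | δ ≤ |dens G z.1 z.2 - dens G X Y|} = #T := by
    simp only [← not_lt]
    exact_mod_cast card_filter_add_card_filter_not _
  have hT : (#T : ℝ) = X.card.choose k * Y.card.choose k := by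
    rw [card_product, card_powersetCard, card_powersetCard, Nat.cast_mul]
  have hgood : (1 - 4 * E ^ 2) * #T ≤ #{z ∈ T | |dens G z.1 z.2 - dens G X Y| < δ} := by
    linarith
  rw [mul_assoc, ← hT]
  rcases le_or_gt (2 * E) 1 with hE1 | hE1
  · refine le_trans (mul_le_mul_of_nonneg_right ?_ (Nat.cast_nonneg _)) hgood
    nlinarith [(exp_pos (-δ ^ 2 * k / 4)).le]
  · exact (mul_nonpos_of_nonpos_of_nonneg (by linarith) (Nat.cast_nonneg _)).trans
      (Nat.cast_nonneg _)

open scoped Classical in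
/-- Random subsets of size `k` preserve the edge density with probability at least
`1 - 2 exp(-δ² k / 4)`, stated as a counting inequality over all pairs of `k`-subsets. -/
theorem density_preserved_by_random_subsets (G : SimpleGraph V) [DecidableRel G.Adj]
    (X Y : Finset V) (hX : X.Nonempty) (hY : Y.Nonempty) (δ : ℝ) (hδ : 0 < δ)
    (k : ℕ) (hk : 0 < k) (hkX : k ≤ X.card) (hkY : k ≤ Y.card) :
    (1 - 2 * Real.exp (-δ ^ 2 * k / 4)) * (X.card.choose k : ℝ) * (Y.card.choose k : ℝ) ≤
      (((X.powersetCard k ×ˢ Y.powersetCard k).filter fun p =>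
          |dens G p.1 p.2 - dens G X Y| < δ).card : ℝ) :=
  density_preserved_by_random_subsets_general G X Y δ hδ k
end

section
/- Counting lemma: Let H be a graph with v(H) vertices and e(H) edges, and let G₁ and G₂ be edge-weighted graphs on the same vertex set V of n vertices with all edge weights in [0,1]. Then |hom(H, G₁) − hom(H, G₂)| ≤ e(H)·d_□(G₁, G₂)·n^{v(H)}. -/
open Finset

/-- Sum of the weights of a weighted graph over the ordered pairs in `U × W`. -/
def eWeight {V : Type*} (G : V → V → ℝ) (U W : Finset V) : ℝ :=
  ∑ x ∈ U, ∑ y ∈ W, G x y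

/-- Cut metric between two weighted graphs on the same vertex set `V` with `|V| = n`:
`max_{U, W ⊆ V} |e_{G₁}(U,W) - e_{G₂}(U,W)| / n²`. -/
noncomputable def cutDist {V : Type*} [Fintype V] [DecidableEq V] (G₁ G₂ : V → V → ℝ) : ℝ :=
  ((univ : Finset V).powerset ×ˢ (univ : Finset V).powerset).sup'
    ((Finset.powerset_nonempty _).product (Finset.powerset_nonempty _))
    fun p => |eWeight G₁ p.1 p.2 - eWeight G₂ p.1 p.2| / (Fintype.card V : ℝ) ^ 2

/-- Weighted homomorphism count `hom(H, G) = ∑_f ∏_{{u,v} ∈ E(H)} G(f(u), f(v))`. -/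
noncomputable def homWeight {W V : Type*} [Fintype W] [DecidableEq W] [Fintype V]
    (H : SimpleGraph W) [DecidableRel H.Adj]
    (G : V → V → ℝ) (hG : ∀ x y, G x y = G y x) : ℝ :=
  ∑ f : W → V, ∏ e ∈ H.edgeFinset,
    Sym2.lift ⟨fun u v => G (f u) (f v), fun _ _ => hG _ _⟩ e

lemma cutDist_nonneg {V : Type*} [Fintype V] [DecidableEq V] (G₁ G₂ : V → V → ℝ) :
    0 ≤ cutDist G₁ G₂ := by
  refine le_trans ?_ (Finset.le_sup' _ (b := ((∅ : Finset V), (∅ : Finset V))) ?_)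
  · positivity
  · simp

lemma cut_bound {V : Type*} [Fintype V] [DecidableEq V] (G₁ G₂ : V → V → ℝ)
    (hn : 0 < Fintype.card V) (U W : Finset V) :
    |eWeight G₁ U W - eWeight G₂ U W| ≤ cutDist G₁ G₂ * (Fintype.card V : ℝ) ^ 2 := by
  have h := Finset.le_sup' (s := ((univ : Finset V).powerset ×ˢ (univ : Finset V).powerset))
    (fun p => |eWeight G₁ p.1 p.2 - eWeight G₂ p.1 p.2| / (Fintype.card V : ℝ) ^ 2)
    (b := (U, W)) (by simp)
  have hpos : (0:ℝ) < (Fintype.card V : ℝ) ^ 2 := by positivity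
  rw [div_le_iff₀ hpos] at h
  exact h.trans_eq rfl

lemma step_bound {V : Type*} [Fintype V] (c a : V → ℝ) (ha : ∀ x, a x ∈ Set.Icc (0:ℝ) 1) :
    ∑ x, a x * c x ≤ ∑ x ∈ univ.filter (fun x => 0 ≤ c x), c x := by
  rw [Finset.sum_filter]
  apply Finset.sum_le_sum
  intro x _
  obtain ⟨h0, h1⟩ := ha x
  by_cases h : 0 ≤ c x
  · simp only [h, if_true]; nlinarith
  · simp only [h, if_false]; push_neg at h; nlinarith

lemma Tbound {V : Type*} [Fintype V] (D : V → V → ℝ) (M : ℝ)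
    (hD : ∀ U W' : Finset V, ∑ x ∈ U, ∑ y ∈ W', D x y ≤ M)
    (a b : V → ℝ) (ha : ∀ x, a x ∈ Set.Icc (0:ℝ) 1) (hb : ∀ y, b y ∈ Set.Icc (0:ℝ) 1) :
    ∑ x, ∑ y, D x y * a x * b y ≤ M := by
  classical
  set U : Finset V := univ.filter (fun x => 0 ≤ ∑ y, D x y * b y) with hU
  calc ∑ x, ∑ y, D x y * a x * b y
      = ∑ x, a x * ∑ y, D x y * b y := by
        apply Finset.sum_congr rfl; intro x _
        rw [Finset.mul_sum]; apply Finset.sum_congr rfl; intro y _; ring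
    _ ≤ ∑ x ∈ U, ∑ y, D x y * b y := step_bound _ a ha
    _ = ∑ y, b y * ∑ x ∈ U, D x y := by
        rw [Finset.sum_comm]; apply Finset.sum_congr rfl; intro y _
        rw [Finset.mul_sum]; apply Finset.sum_congr rfl; intro x _; ring
    _ ≤ ∑ y ∈ univ.filter (fun y => 0 ≤ ∑ x ∈ U, D x y), ∑ x ∈ U, D x y :=
        step_bound _ b hb
    _ = ∑ x ∈ U, ∑ y ∈ univ.filter (fun y => 0 ≤ ∑ x ∈ U, D x y), D x y := Finset.sum_comm
    _ ≤ M := hD _ _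

lemma funCut {V : Type*} [Fintype V] [DecidableEq V] (G₁ G₂ : V → V → ℝ)
    (hn : 0 < Fintype.card V)
    (a b : V → ℝ) (ha : ∀ x, a x ∈ Set.Icc (0:ℝ) 1) (hb : ∀ y, b y ∈ Set.Icc (0:ℝ) 1) :
    |∑ x, ∑ y, (G₁ x y - G₂ x y) * a x * b y|
      ≤ cutDist G₁ G₂ * (Fintype.card V : ℝ) ^ 2 := by
  have key : ∀ U W' : Finset V,
      ∑ x ∈ U, ∑ y ∈ W', (G₁ x y - G₂ x y) = eWeight G₁ U W' - eWeight G₂ U W' := by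
    intro U W'
    simp [eWeight, Finset.sum_sub_distrib]
  rw [abs_le]
  constructor
  · rw [neg_le, ← Finset.sum_neg_distrib]
    simp_rw [← Finset.sum_neg_distrib]
    have : ∀ x y : V, -((G₁ x y - G₂ x y) * a x * b y) = (G₂ x y - G₁ x y) * a x * b y := by
      intro x y; ring
    simp_rw [this]
    apply Tbound _ _ _ a b ha hb
    intro U W'
    have h2 : ∑ x ∈ U, ∑ y ∈ W', (G₂ x y - G₁ x y) = -(eWeight G₁ U W' - eWeight G₂ U W') := by
      simp [eWeight, Finset.sum_sub_distrib]
    rw [h2]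
    exact (neg_le_abs _).trans (cut_bound G₁ G₂ hn U W')
  · apply Tbound _ _ _ a b ha hb
    intro U W'
    rw [key]
    exact (le_abs_self _).trans (cut_bound G₁ G₂ hn U W')

lemma marg {W V : Type*} [Fintype W] [Fintype V] [DecidableEq W] (F : (W → V) → ℝ) (u : W) :
    ∑ g : W → V, ∑ x : V, F (Function.update g u x)
      = (Fintype.card V : ℝ) * ∑ f : W → V, F f := by
  classical
  have hbij : Function.Bijective
      (fun p : (W → V) × V => (Function.update p.1 u p.2, p.1 u)) := by
    have hinv : Function.Involutive
        (fun p : (W → V) × V => (Function.update p.1 u p.2, p.1 u)) := by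
      intro p
      simp [Function.update_idem, Function.update_self, Function.update_eq_self]
    exact hinv.bijective
  have h := Fintype.sum_bijective _ hbij
    (fun p : (W → V) × V => F (Function.update p.1 u p.2))
    (fun p : (W → V) × V => F p.1)
    (fun p => rfl)
  rw [Fintype.sum_prod_type] at h
  rw [h, Fintype.sum_prod_type]
  simp only [Finset.sum_const, Finset.card_univ, nsmul_eq_mul]
  -- goal: sum card*F = card * sum
  rw [← Finset.mul_sum]

lemma keyB {W V : Type*} [Fintype W] [DecidableEq W] [Fintype V] [DecidableEq V]
    (G₁ G₂ : V → V → ℝ) (u v : W) (huv : u ≠ v)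
    (R : Finset (Sym2 W)) (hR : s(u,v) ∉ R)
    (φ : Sym2 W → (W → V) → ℝ)
    (hloc : ∀ (e' : Sym2 W) (f : W → V) (w : W) (y : V),
      w ∉ e' → φ e' (Function.update f w y) = φ e' f)
    (hbd : ∀ (e' : Sym2 W) (f : W → V), φ e' f ∈ Set.Icc (0:ℝ) 1) :
    |∑ f : W → V, (G₁ (f u) (f v) - G₂ (f u) (f v)) * ∏ e' ∈ R, φ e' f|
      ≤ cutDist G₁ G₂ * (Fintype.card V : ℝ) ^ (Fintype.card W) := by
  classical
  rcases isEmpty_or_nonempty V with hV | hV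
  · haveI : IsEmpty (W → V) := ⟨fun f => hV.false (f u)⟩
    rw [Finset.univ_eq_empty, Finset.sum_empty, abs_zero]
    have hc : Fintype.card V = 0 := Fintype.card_eq_zero
    have hW : Nonempty W := ⟨u⟩
    have hk : Fintype.card W ≠ 0 := Fintype.card_ne_zero
    rw [hc]
    simp [zero_pow hk]
  have hn : 0 < Fintype.card V := Fintype.card_pos
  set n : ℝ := (Fintype.card V : ℝ) with hndef
  have hnpos : (0:ℝ) < n := by rw [hndef]; exact_mod_cast hn
  set F : (W → V) → ℝ :=
    fun f => (G₁ (f u) (f v) - G₂ (f u) (f v)) * ∏ e' ∈ R, φ e' f with hF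
  have hmarg : ∑ g : W → V, ∑ x : V, ∑ y : V,
      F (Function.update (Function.update g u x) v y) = n ^ 2 * ∑ f : W → V, F f := by
    have h1 : ∑ g : W → V, ∑ x : V,
        (fun h => ∑ y : V, F (Function.update h v y)) (Function.update g u x)
        = n * ∑ g : W → V, ∑ y : V, F (Function.update g v y) :=
      marg (fun h => ∑ y : V, F (Function.update h v y)) u
    rw [show (∑ g : W → V, ∑ x : V, ∑ y : V,
        F (Function.update (Function.update g u x) v y))
        = ∑ g : W → V, ∑ x : V,
        (fun h => ∑ y : V, F (Function.update h v y)) (Function.update g u x) from rfl,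
      h1, marg F v]
    ring
  have hinner : ∀ g : W → V,
      |∑ x : V, ∑ y : V, F (Function.update (Function.update g u x) v y)|
        ≤ cutDist G₁ G₂ * n ^ 2 := by
    intro g
    set a : V → ℝ := fun x => ∏ e' ∈ R.filter (fun e' => u ∈ e'), φ e' (Function.update g u x)
      with ha
    set b : V → ℝ := fun y =>
      (∏ e' ∈ (R.filter (fun e' => u ∉ e')).filter (fun e' => v ∈ e'),
        φ e' (Function.update g v y)) *
      ∏ e' ∈ (R.filter (fun e' => u ∉ e')).filter (fun e' => v ∉ e'), φ e' g with hb
    have hfac : ∀ x y : V,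
        F (Function.update (Function.update g u x) v y) = (G₁ x y - G₂ x y) * a x * b y := by
      intro x y
      have hu : Function.update (Function.update g u x) v y u = x := by
        rw [Function.update_of_ne huv, Function.update_self]
      have hv : Function.update (Function.update g u x) v y v = y := Function.update_self _ _ _
      rw [hF]
      simp only [hu, hv]
      have hprod : ∏ e' ∈ R, φ e' (Function.update (Function.update g u x) v y)
          = a x * b y := by
        rw [← Finset.prod_filter_mul_prod_filter_not R (fun e' => u ∈ e'),
          ← Finset.prod_filter_mul_prod_filter_not (R.filter (fun e' => u ∉ e'))
            (fun e' => v ∈ e')]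
        rw [ha, hb]
        have e1 : ∏ e' ∈ R.filter (fun e' => u ∈ e'),
            φ e' (Function.update (Function.update g u x) v y)
            = ∏ e' ∈ R.filter (fun e' => u ∈ e'), φ e' (Function.update g u x) := by
          apply Finset.prod_congr rfl
          intro e' he'
          rw [Finset.mem_filter] at he'
          have hvne : v ∉ e' := by
            intro hve
            exact hR ((Sym2.mem_and_mem_iff huv).mp ⟨he'.2, hve⟩ ▸ he'.1)
          exact hloc e' _ v y hvne
        have e2 : ∏ e' ∈ (R.filter (fun e' => u ∉ e')).filter (fun e' => v ∈ e'),
            φ e' (Function.update (Function.update g u x) v y)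
            = ∏ e' ∈ (R.filter (fun e' => u ∉ e')).filter (fun e' => v ∈ e'),
              φ e' (Function.update g v y) := by
          apply Finset.prod_congr rfl
          intro e' he'
          simp only [Finset.mem_filter] at he'
          rw [Function.update_comm huv, hloc e' _ u x he'.1.2]
        have e3 : ∏ e' ∈ (R.filter (fun e' => u ∉ e')).filter (fun e' => ¬ v ∈ e'),
            φ e' (Function.update (Function.update g u x) v y)
            = ∏ e' ∈ (R.filter (fun e' => u ∉ e')).filter (fun e' => v ∉ e'), φ e' g := by
          apply Finset.prod_congr rfl
          intro e' he'
          simp only [Finset.mem_filter] at he'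
          rw [hloc e' _ v y he'.2, hloc e' _ u x he'.1.2]
        rw [e1, e2, e3]
      rw [hprod]
      ring
    have haI : ∀ x, a x ∈ Set.Icc (0:ℝ) 1 := by
      intro x
      constructor
      · exact Finset.prod_nonneg fun e' _ => (hbd e' _).1
      · exact Finset.prod_le_one (fun e' _ => (hbd e' _).1) (fun e' _ => (hbd e' _).2)
    have hbI : ∀ y, b y ∈ Set.Icc (0:ℝ) 1 := by
      intro y
      have h1 : ∀ (s : Finset (Sym2 W)) (f : W → V), ∏ e' ∈ s, φ e' f ∈ Set.Icc (0:ℝ) 1 :=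
        fun s f => ⟨Finset.prod_nonneg fun e' _ => (hbd e' _).1,
          Finset.prod_le_one (fun e' _ => (hbd e' _).1) (fun e' _ => (hbd e' _).2)⟩
      obtain ⟨p1, p2⟩ := h1 ((R.filter (fun e' => u ∉ e')).filter (fun e' => v ∈ e'))
        (Function.update g v y)
      obtain ⟨q1, q2⟩ := h1 ((R.filter (fun e' => u ∉ e')).filter (fun e' => v ∉ e')) g
      exact ⟨mul_nonneg p1 q1, mul_le_one₀ p2 q1 q2⟩
    calc |∑ x : V, ∑ y : V, F (Function.update (Function.update g u x) v y)|
        = |∑ x : V, ∑ y : V, (G₁ x y - G₂ x y) * a x * b y| := by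
          congr 1
          apply Finset.sum_congr rfl; intro x _
          apply Finset.sum_congr rfl; intro y _
          exact hfac x y
      _ ≤ cutDist G₁ G₂ * n ^ 2 := funCut G₁ G₂ hn a b haI hbI
  have htot : |∑ g : W → V, ∑ x : V, ∑ y : V,
      F (Function.update (Function.update g u x) v y)|
      ≤ n ^ (Fintype.card W) * (cutDist G₁ G₂ * n ^ 2) := by
    calc |∑ g : W → V, ∑ x : V, ∑ y : V, F (Function.update (Function.update g u x) v y)|
        ≤ ∑ g : W → V, |∑ x : V, ∑ y : V, F (Function.update (Function.update g u x) v y)| :=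
          Finset.abs_sum_le_sum_abs _ _
      _ ≤ ∑ _g : W → V, cutDist G₁ G₂ * n ^ 2 := Finset.sum_le_sum fun g _ => hinner g
      _ = n ^ (Fintype.card W) * (cutDist G₁ G₂ * n ^ 2) := by
          rw [Finset.sum_const, Finset.card_univ, Fintype.card_fun, nsmul_eq_mul]
          push_cast
          ring
  rw [hmarg, abs_mul, abs_of_pos (by positivity : (0:ℝ) < n ^ 2)] at htot
  have htot' : |∑ f : W → V, F f| * n ^ 2
      ≤ (cutDist G₁ G₂ * n ^ (Fintype.card W)) * n ^ 2 := by linarith [htot]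
  exact le_of_mul_le_mul_right htot' (by positivity)

lemma lift_update {W V : Type*} [DecidableEq W] (G : V → V → ℝ) (hG : ∀ x y, G x y = G y x)
    (e : Sym2 W) (f : W → V) (w : W) (y : V) (hw : w ∉ e) :
    Sym2.lift ⟨fun a b => G (Function.update f w y a) (Function.update f w y b),
      fun _ _ => hG _ _⟩ e
      = Sym2.lift ⟨fun a b => G (f a) (f b), fun _ _ => hG _ _⟩ e := by
  induction e using Sym2.ind with
  | _ a b =>
    simp only [Sym2.mem_iff, not_or] at hw
    rw [Sym2.lift_mk, Sym2.lift_mk]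
    simp only
    rw [Function.update_of_ne (fun h => hw.1 h.symm),
      Function.update_of_ne (fun h => hw.2 h.symm)]

lemma lift_mem_Icc {W V : Type*} (G : V → V → ℝ) (hG : ∀ x y, G x y = G y x)
    (h : ∀ x y, G x y ∈ Set.Icc (0:ℝ) 1) (e : Sym2 W) (f : W → V) :
    Sym2.lift ⟨fun a b => G (f a) (f b), fun _ _ => hG _ _⟩ e ∈ Set.Icc (0:ℝ) 1 := by
  induction e using Sym2.ind with
  | _ a b => rw [Sym2.lift_mk]; exact h _ _


/-- Counting lemma: `|hom(H,G₁) - hom(H,G₂)| ≤ e(H) d_□(G₁,G₂) n^{v(H)}`. -/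
theorem counting_lemma {W V : Type*} [Fintype W] [DecidableEq W] [Fintype V] [DecidableEq V]
    (H : SimpleGraph W) [DecidableRel H.Adj] (G₁ G₂ : V → V → ℝ)
    (h₁sym : ∀ x y, G₁ x y = G₁ y x) (h₂sym : ∀ x y, G₂ x y = G₂ y x)
    (h₁ : ∀ x y, G₁ x y ∈ Set.Icc (0 : ℝ) 1) (h₂ : ∀ x y, G₂ x y ∈ Set.Icc (0 : ℝ) 1) :
    |homWeight H G₁ h₁sym - homWeight H G₂ h₂sym| ≤
      (H.edgeFinset.card : ℝ) * cutDist G₁ G₂ * (Fintype.card V : ℝ) ^ (Fintype.card W) := by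
  classical
  set φ₁ : Sym2 W → (W → V) → ℝ :=
    fun e f => Sym2.lift ⟨fun a b => G₁ (f a) (f b), fun _ _ => h₁sym _ _⟩ e with hφ₁
  set φ₂ : Sym2 W → (W → V) → ℝ :=
    fun e f => Sym2.lift ⟨fun a b => G₂ (f a) (f b), fun _ _ => h₂sym _ _⟩ e with hφ₂
  set ψ : Finset (Sym2 W) → Sym2 W → (W → V) → ℝ :=
    fun S e f => if e ∈ S then φ₁ e f else φ₂ e f with hψ
  set hyb : Finset (Sym2 W) → ℝ :=
    fun S => ∑ f : W → V, ∏ e ∈ H.edgeFinset, ψ S e f with hhyb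
  have h1 : homWeight H G₁ h₁sym = hyb H.edgeFinset := by
    rw [hhyb, homWeight]
    apply Finset.sum_congr rfl; intro f _
    apply Finset.prod_congr rfl; intro e he
    simp only [hψ, he, if_true, hφ₁]
  have h2 : homWeight H G₂ h₂sym = hyb ∅ := by
    rw [hhyb, homWeight]
    apply Finset.sum_congr rfl; intro f _
    apply Finset.prod_congr rfl; intro e _
    simp only [hψ, Finset.notMem_empty, if_false, hφ₂]
  have tele : ∀ S : Finset (Sym2 W), S ⊆ H.edgeFinset →
      |hyb S - hyb ∅| ≤ (S.card : ℝ) * cutDist G₁ G₂ *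
        (Fintype.card V : ℝ) ^ (Fintype.card W) := by
    intro S
    induction S using Finset.induction_on with
    | empty => intro _; simp
    | @insert e S' henot ih =>
      intro hsub
      have heE : e ∈ H.edgeFinset := hsub (Finset.mem_insert_self e S')
      have hsub' : S' ⊆ H.edgeFinset := fun x hx => hsub (Finset.mem_insert_of_mem hx)
      obtain ⟨u, v, rfl⟩ : ∃ u v, e = s(u, v) :=
        Sym2.ind (f := fun e => ∃ u v, e = s(u, v)) (fun u v => ⟨u, v, rfl⟩) e
      have hadj : H.Adj u v := by
        rwa [SimpleGraph.mem_edgeFinset, SimpleGraph.mem_edgeSet] at heE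
      have huv : u ≠ v := hadj.ne
      have hdiff : hyb (insert s(u,v) S') - hyb S'
          = ∑ f : W → V, (G₁ (f u) (f v) - G₂ (f u) (f v)) *
              ∏ e' ∈ H.edgeFinset.erase s(u,v), ψ S' e' f := by
        rw [hhyb]
        simp only
        rw [← Finset.sum_sub_distrib]
        apply Finset.sum_congr rfl
        intro f _
        rw [← Finset.mul_prod_erase H.edgeFinset _ heE,
            ← Finset.mul_prod_erase H.edgeFinset (fun e => ψ S' e f) heE]
        have hrest : ∏ e' ∈ H.edgeFinset.erase s(u,v), ψ (insert s(u,v) S') e' f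
            = ∏ e' ∈ H.edgeFinset.erase s(u,v), ψ S' e' f := by
          apply Finset.prod_congr rfl
          intro e' he'
          have hne : e' ≠ s(u,v) := Finset.ne_of_mem_erase he'
          simp only [hψ, Finset.mem_insert, hne, false_or]
        rw [hrest]
        have hpe1 : ψ (insert s(u,v) S') s(u,v) f = G₁ (f u) (f v) := by
          simp only [hψ, Finset.mem_insert_self, if_true, hφ₁, Sym2.lift_mk]
        have hpe2 : ψ S' s(u,v) f = G₂ (f u) (f v) := by
          simp only [hψ, henot, if_false, hφ₂, Sym2.lift_mk]
        rw [hpe1, hpe2]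
        ring
      have hloc : ∀ (e' : Sym2 W) (f : W → V) (w : W) (y : V), w ∉ e' →
          ψ S' e' (Function.update f w y) = ψ S' e' f := by
        intro e' f w y hw
        rw [hψ]
        by_cases h : e' ∈ S'
        · simp only [h, if_true, hφ₁]
          exact lift_update G₁ h₁sym e' f w y hw
        · simp only [h, if_false, hφ₂]
          exact lift_update G₂ h₂sym e' f w y hw
      have hbd : ∀ (e' : Sym2 W) (f : W → V), ψ S' e' f ∈ Set.Icc (0:ℝ) 1 := by
        intro e' f
        rw [hψ]
        by_cases h : e' ∈ S'
        · simp only [h, if_true, hφ₁]; exact lift_mem_Icc G₁ h₁sym h₁ e' f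
        · simp only [h, if_false, hφ₂]; exact lift_mem_Icc G₂ h₂sym h₂ e' f
      have hkey := keyB G₁ G₂ u v huv (H.edgeFinset.erase s(u,v))
        (Finset.notMem_erase _ _) (ψ S') hloc hbd
      calc |hyb (insert s(u,v) S') - hyb ∅|
          ≤ |hyb (insert s(u,v) S') - hyb S'| + |hyb S' - hyb ∅| := abs_sub_le _ _ _
        _ ≤ cutDist G₁ G₂ * (Fintype.card V : ℝ) ^ (Fintype.card W)
            + (S'.card : ℝ) * cutDist G₁ G₂ * (Fintype.card V : ℝ) ^ (Fintype.card W) := by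
            apply add_le_add _ (ih hsub')
            rw [hdiff]
            exact hkey
        _ = ((insert s(u,v) S').card : ℝ) * cutDist G₁ G₂ *
            (Fintype.card V : ℝ) ^ (Fintype.card W) := by
            rw [Finset.card_insert_of_notMem henot]
            push_cast
            ring
  rw [h1, h2]
  exact tele H.edgeFinset (subset_refl _)
end

section
/- Let 0 < ε ≤ 1 and δ > 0. Suppose (V₁, V₂) is an ε-regular pair of nonempty vertex subsets of a graph, and V₁', V₂' are nonempty vertex subsets with |V_i Δ V_i'| ≤ δ·ε·|V_i| for i = 1, 2. Then (V₁', V₂') is an (ε+4δ)-regular pair. -/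
open Finset

variable {V : Type*} [Fintype V] [DecidableEq V]

/-- The pair `(X,Y)` is `ε`-regular: for all `X' ⊆ X`, `Y' ⊆ Y` with `|X'| ≥ ε|X|` and
`|Y'| ≥ ε|Y|`, one has `|d(X',Y') - d(X,Y)| ≤ ε`. -/
def IsRegularPair (G : SimpleGraph V) [DecidableRel G.Adj] (ε : ℝ) (X Y : Finset V) : Prop :=
  ∀ ⦃X' : Finset V⦄, X' ⊆ X → ∀ ⦃Y' : Finset V⦄, Y' ⊆ Y →
    ε * (X.card : ℝ) ≤ (X'.card : ℝ) → ε * (Y.card : ℝ) ≤ (Y'.card : ℝ) →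
    |dens G X' Y' - dens G X Y| ≤ ε

lemma epairs_le_card (G : SimpleGraph V) [DecidableRel G.Adj] (X Y : Finset V) :
    epairs G X Y ≤ X.card * Y.card := by
  calc epairs G X Y ≤ (X ×ˢ Y).card := card_filter_le _ _
  _ = X.card * Y.card := card_product _ _

lemma epairs_mono (G : SimpleGraph V) [DecidableRel G.Adj] {X X' Y Y' : Finset V}
    (hX : X ⊆ X') (hY : Y ⊆ Y') : epairs G X Y ≤ epairs G X' Y' :=
  card_le_card (filter_subset_filter _ (product_subset_product hX hY))

lemma epairs_upper (G : SimpleGraph V) [DecidableRel G.Adj] {X X' Y Y' : Finset V}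
    (hX : X ⊆ X') (hY : Y ⊆ Y') :
    epairs G X' Y' ≤ epairs G X Y + (X' \ X).card * Y'.card + X.card * (Y' \ Y).card := by
  have hsub : X' ×ˢ Y' ⊆ (X ×ˢ Y) ∪ ((X' \ X) ×ˢ Y') ∪ (X ×ˢ (Y' \ Y)) := by
    intro p hp
    simp only [mem_product, mem_union, mem_sdiff] at *
    by_cases h1 : p.1 ∈ X
    · by_cases h2 : p.2 ∈ Y
      · exact Or.inl (Or.inl ⟨h1, h2⟩)
      · exact Or.inr ⟨h1, hp.2, h2⟩
    · exact Or.inl (Or.inr ⟨⟨hp.1, h1⟩, hp.2⟩)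
  calc epairs G X' Y'
      ≤ (((X ×ˢ Y) ∪ ((X' \ X) ×ˢ Y') ∪ (X ×ˢ (Y' \ Y))).filter fun p => G.Adj p.1 p.2).card :=
        card_le_card (filter_subset_filter _ hsub)
    _ ≤ (((X ×ˢ Y) ∪ ((X' \ X) ×ˢ Y')).filter fun p => G.Adj p.1 p.2).card
        + ((X ×ˢ (Y' \ Y)).filter fun p => G.Adj p.1 p.2).card := by
        rw [filter_union]; exact card_union_le _ _
    _ ≤ ((X ×ˢ Y).filter fun p => G.Adj p.1 p.2).card
        + (((X' \ X) ×ˢ Y').filter fun p => G.Adj p.1 p.2).card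
        + ((X ×ˢ (Y' \ Y)).filter fun p => G.Adj p.1 p.2).card := by
        rw [filter_union]; exact Nat.add_le_add_right (card_union_le _ _) _
    _ ≤ epairs G X Y + (X' \ X).card * Y'.card + X.card * (Y' \ Y).card := by
        refine Nat.add_le_add (Nat.add_le_add le_rfl ?_) ?_ <;>
          exact le_trans (card_filter_le _ _) (le_of_eq (card_product _ _))

lemma pert_real (a b a' b' e e' cA cB : ℝ) (ha : 0 < a) (hb : 0 < b)
    (hcA : a' = a + cA) (hcB : b' = b + cB) (hcA0 : 0 ≤ cA) (hcB0 : 0 ≤ cB)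
    (he0 : 0 ≤ e) (hel : e ≤ e') (heu : e' ≤ e + cA * b' + a * cB) (hed : e ≤ a * b) :
    |e' / (a' * b') - e / (a * b)| ≤ cA / a' + cB / b' := by
  have ha' : 0 < a' := by nlinarith
  have hb' : 0 < b' := by nlinarith
  have hab : (0:ℝ) < a * b := mul_pos ha hb
  have hab' : (0:ℝ) < a' * b' := mul_pos ha' hb'
  have heq : cA / a' + cB / b' = (cA * b' + a' * cB) / (a' * b') := by
    field_simp
  have hup : e' * (a * b) - (a' * b') * e ≤ (cA * b' + a' * cB) * (a * b) := by
    subst hcA hcB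
    nlinarith [mul_le_mul_of_nonneg_right heu hab.le,
      mul_nonneg (mul_nonneg he0 hcA0) hcB0,
      mul_nonneg (mul_nonneg he0 hcA0) hb.le,
      mul_nonneg (mul_nonneg he0 hcB0) ha.le,
      mul_nonneg (mul_nonneg (mul_nonneg hcA0 hcB0) ha.le) hb.le]
  have hlow : e * (a' * b') - (a * b) * e' ≤ (cA * b' + a' * cB) * (a * b) := by
    subst hcA hcB
    nlinarith [mul_le_mul_of_nonneg_right hel hab.le,
      mul_le_mul_of_nonneg_right hed (show (0:ℝ) ≤ a * cB + cA * b + cA * cB by positivity),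
      mul_nonneg (mul_nonneg (mul_nonneg hcA0 hcB0) ha.le) hb.le]
  rw [heq, abs_le]
  constructor
  · rw [neg_le, neg_sub, div_sub_div _ _ (ne_of_gt hab) (ne_of_gt hab'),
      div_le_div_iff₀ (mul_pos hab hab') hab']
    nlinarith [mul_le_mul_of_nonneg_right hlow hab'.le]
  · rw [div_sub_div _ _ (ne_of_gt hab') (ne_of_gt hab),
      div_le_div_iff₀ (mul_pos hab' hab) hab']
    nlinarith [mul_le_mul_of_nonneg_right hup hab'.le]

lemma dens_pert (G : SimpleGraph V) [DecidableRel G.Adj] {X X' Y Y' : Finset V}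
    (hX : X ⊆ X') (hY : Y ⊆ Y') (hXn : X.Nonempty) (hYn : Y.Nonempty) :
    |dens G X' Y' - dens G X Y| ≤
      ((X' \ X).card : ℝ) / (X'.card : ℝ) + ((Y' \ Y).card : ℝ) / (Y'.card : ℝ) := by
  have hA : (X'.card : ℝ) = (X.card : ℝ) + ((X' \ X).card : ℝ) := by
    rw [← Nat.cast_add]
    exact_mod_cast (card_sdiff_add_card_eq_card hX).symm.trans (Nat.add_comm _ _)
  have hB : (Y'.card : ℝ) = (Y.card : ℝ) + ((Y' \ Y).card : ℝ) := by
    rw [← Nat.cast_add]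
    exact_mod_cast (card_sdiff_add_card_eq_card hY).symm.trans (Nat.add_comm _ _)
  have := pert_real (X.card) (Y.card) (X'.card) (Y'.card) (epairs G X Y) (epairs G X' Y')
    ((X' \ X).card) ((Y' \ Y).card)
    (by exact_mod_cast card_pos.2 hXn) (by exact_mod_cast card_pos.2 hYn)
    hA hB (by positivity) (by positivity) (by positivity)
    (by exact_mod_cast epairs_mono G hX hY)
    (by exact_mod_cast epairs_upper G hX hY)
    (by exact_mod_cast epairs_le_card G X Y)
  unfold _root_.dens
  exact this

lemma arith_le_one (t a' x : ℝ) (h1 : t * a' ≤ x) (h2 : x ≤ a') (h3 : 0 < a') : t ≤ 1 := by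
  nlinarith

lemma arith_s_pos (ε δ : ℝ) (hε0 : 0 < ε) (hε1 : ε ≤ 1) (hδ : 0 < δ) (h : ε + 4 * δ ≤ 1) :
    0 < 1 - δ * ε := by nlinarith

lemma arith_pos_sub (p q a t : ℝ) (h : p + q ≤ t * a) (hq : 0 ≤ q) (ht : t < 1) (ha : 0 < a) :
    0 < a - p := by nlinarith

lemma arith_lb (t a p q A a' : ℝ) (hA : A = a - p) (hAa' : A ≤ a') (hpq : p + q ≤ t * a)
    (hq : 0 ≤ q) : (1 - t) * a ≤ a' := by nlinarith

lemma arith_eps1 (ε δ c x a : ℝ) (hε0 : 0 < ε) (hε1 : ε ≤ 1) (hδ : 0 < δ)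
    (hε'1 : ε + 4 * δ ≤ 1) (ha : 0 ≤ a) (hc : c ≤ δ * ε * a)
    (hx : (ε + 4 * δ) * ((1 - δ * ε) * a) ≤ x) : ε * a ≤ x - c := by
  have hεε' : ε * (ε + 4 * δ) ≤ 1 := by nlinarith
  have hbr : ε ≤ (ε + 4 * δ) * (1 - δ * ε) - δ * ε := by nlinarith
  nlinarith [mul_le_mul_of_nonneg_right hbr ha]

lemma arith_Q (ε δ a c x : ℝ) (hδε : 0 ≤ δ * ε) (hε'0 : 0 < ε + 4 * δ) (hs : 0 < 1 - δ * ε)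
    (hx0 : 0 < x) (ha : 0 ≤ a) (hc : c ≤ δ * ε * a)
    (hx : (ε + 4 * δ) * ((1 - δ * ε) * a) ≤ x) :
    c / x ≤ δ * ε / ((ε + 4 * δ) * (1 - δ * ε)) := by
  have hden : 0 < (ε + 4 * δ) * (1 - δ * ε) := mul_pos hε'0 hs
  rw [div_le_div_iff₀ hx0 hden]
  nlinarith [mul_le_mul_of_nonneg_left hx hδε, mul_le_mul_of_nonneg_right hc hden.le]

lemma arith_Q34 (t p q a a' : ℝ) (ht0 : 0 ≤ t) (hs : 0 < 1 - t) (ha : 0 < a) (ha' : 0 < a')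
    (hp : 0 ≤ p) (hq : 0 ≤ q) (hpq : p + q ≤ t * a) (hlb : (1 - t) * a ≤ a') :
    p / a + q / a' ≤ t / (1 - t) := by
  rw [div_add_div _ _ (ne_of_gt ha) (ne_of_gt ha'), div_le_div_iff₀ (mul_pos ha ha') hs]
  nlinarith [mul_le_mul_of_nonneg_left hlb hq, mul_le_mul_of_nonneg_right hpq ha'.le,
    mul_nonneg (mul_nonneg hp ht0) ha'.le]

lemma arith_K (ε δ : ℝ) (hε0 : 0 < ε) (hε1 : ε ≤ 1) (hδ : 0 < δ) (hε'1 : ε + 4 * δ ≤ 1) :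
    δ * ε / ((ε + 4 * δ) * (1 - δ * ε)) + δ * ε / (1 - δ * ε) ≤ 2 * δ := by
  have hε'0 : (0:ℝ) < ε + 4 * δ := by linarith
  have hs : 0 < 1 - δ * ε := arith_s_pos ε δ hε0 hε1 hδ hε'1
  have hden : 0 < (ε + 4 * δ) * (1 - δ * ε) := mul_pos hε'0 hs
  have hcore : ε + ε * (ε + 4 * δ) + 2 * δ * ε * (ε + 4 * δ) ≤ 2 * (ε + 4 * δ) := by
    have h1 : ε + 2 * δ * ε ≤ 1 := by nlinarith
    nlinarith [mul_le_mul_of_nonneg_left h1 hε'0.le]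
  rw [div_add_div _ _ (ne_of_gt hden) (ne_of_gt hs), div_le_iff₀ (mul_pos hden hs)]
  nlinarith [mul_le_mul_of_nonneg_right (mul_le_mul_of_nonneg_left hcore hδ.le) hs.le]

lemma card_symmDiff_real (s t : Finset V) :
    ((symmDiff s t).card : ℝ) = ((s \ t).card : ℝ) + ((t \ s).card : ℝ) := by
  rw [← Nat.cast_add]
  congr 1
  rw [symmDiff_def, sup_eq_union, card_union_of_disjoint disjoint_sdiff_sdiff]

set_option maxHeartbeats 1000000 in
/-- Slightly perturbing an `ε`-regular pair yields an `(ε+4δ)`-regular pair. -/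
theorem regular_pair_perturbation (G : SimpleGraph V) [DecidableRel G.Adj]
    (ε δ : ℝ) (hε0 : 0 < ε) (hε1 : ε ≤ 1) (hδ : 0 < δ)
    (V₁ V₂ V₁' V₂' : Finset V) (hV₁ : V₁.Nonempty) (hV₂ : V₂.Nonempty)
    (hV₁' : V₁'.Nonempty) (hV₂' : V₂'.Nonempty)
    (hreg : IsRegularPair G ε V₁ V₂)
    (h₁ : ((symmDiff V₁ V₁').card : ℝ) ≤ δ * ε * (V₁.card : ℝ))
    (h₂ : ((symmDiff V₂ V₂').card : ℝ) ≤ δ * ε * (V₂.card : ℝ)) :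
    IsRegularPair G (ε + 4 * δ) V₁' V₂' := by
  intro X' hX'sub Y' hY'sub hX'card hY'card
  have ha0 : (0:ℝ) < (V₁.card : ℝ) := by exact_mod_cast card_pos.2 hV₁
  have hb0 : (0:ℝ) < (V₂.card : ℝ) := by exact_mod_cast card_pos.2 hV₂
  have ha'0 : (0:ℝ) < (V₁'.card : ℝ) := by exact_mod_cast card_pos.2 hV₁'
  have hb'0 : (0:ℝ) < (V₂'.card : ℝ) := by exact_mod_cast card_pos.2 hV₂'
  have hε'0 : (0:ℝ) < ε + 4 * δ := by linarith
  have hx0 : (0:ℝ) < (X'.card : ℝ) := lt_of_lt_of_le (by positivity) hX'card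
  have hy0 : (0:ℝ) < (Y'.card : ℝ) := lt_of_lt_of_le (by positivity) hY'card
  have hxa' : (X'.card : ℝ) ≤ (V₁'.card : ℝ) := by exact_mod_cast card_le_card hX'sub
  have hε'1 : ε + 4 * δ ≤ 1 := arith_le_one _ _ _ hX'card hxa' ha'0
  have hs : (0:ℝ) < 1 - δ * ε := arith_s_pos ε δ hε0 hε1 hδ hε'1
  have hδε0 : (0:ℝ) ≤ δ * ε := by positivity
  -- symmetric difference facts
  have hs1 : ((V₁ \ V₁').card : ℝ) + ((V₁' \ V₁).card : ℝ) ≤ δ * ε * (V₁.card : ℝ) := by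
    rw [← card_symmDiff_real]; exact h₁
  have hs2 : ((V₂ \ V₂').card : ℝ) + ((V₂' \ V₂).card : ℝ) ≤ δ * ε * (V₂.card : ℝ) := by
    rw [← card_symmDiff_real]; exact h₂
  have hp10 : (0:ℝ) ≤ ((V₁ \ V₁').card : ℝ) := Nat.cast_nonneg _
  have hq10 : (0:ℝ) ≤ ((V₁' \ V₁).card : ℝ) := Nat.cast_nonneg _
  have hp20 : (0:ℝ) ≤ ((V₂ \ V₂').card : ℝ) := Nat.cast_nonneg _
  have hq20 : (0:ℝ) ≤ ((V₂' \ V₂).card : ℝ) := Nat.cast_nonneg _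
  -- intersections A = V₁ ∩ V₁', B = V₂ ∩ V₂'
  have hE1 : V₁ \ (V₁ ∩ V₁') = V₁ \ V₁' := sdiff_inter_self_left V₁ V₁'
  have hE1' : V₁' \ (V₁ ∩ V₁') = V₁' \ V₁ := by
    rw [inter_comm]; exact sdiff_inter_self_left V₁' V₁
  have hE2 : V₂ \ (V₂ ∩ V₂') = V₂ \ V₂' := sdiff_inter_self_left V₂ V₂'
  have hE2' : V₂' \ (V₂ ∩ V₂') = V₂' \ V₂ := by
    rw [inter_comm]; exact sdiff_inter_self_left V₂' V₂
  have hAcard : ((V₁ ∩ V₁').card : ℝ) = (V₁.card : ℝ) - ((V₁ \ V₁').card : ℝ) := by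
    have h := card_sdiff_add_card_eq_card (inter_subset_left (s₁ := V₁) (s₂ := V₁'))
    rw [hE1] at h
    have h' : ((V₁ \ V₁').card : ℝ) + ((V₁ ∩ V₁').card : ℝ) = (V₁.card : ℝ) := by
      exact_mod_cast h
    linarith
  have hBcard : ((V₂ ∩ V₂').card : ℝ) = (V₂.card : ℝ) - ((V₂ \ V₂').card : ℝ) := by
    have h := card_sdiff_add_card_eq_card (inter_subset_left (s₁ := V₂) (s₂ := V₂'))
    rw [hE2] at h
    have h' : ((V₂ \ V₂').card : ℝ) + ((V₂ ∩ V₂').card : ℝ) = (V₂.card : ℝ) := by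
      exact_mod_cast h
    linarith
  have hδε1 : δ * ε < 1 := by linarith
  have hAne : (V₁ ∩ V₁').Nonempty := by
    rw [← card_pos]
    have h : (0:ℝ) < ((V₁ ∩ V₁').card : ℝ) := by
      rw [hAcard]; exact arith_pos_sub _ _ _ _ hs1 hq10 hδε1 ha0
    exact_mod_cast h
  have hBne : (V₂ ∩ V₂').Nonempty := by
    rw [← card_pos]
    have h : (0:ℝ) < ((V₂ ∩ V₂').card : ℝ) := by
      rw [hBcard]; exact arith_pos_sub _ _ _ _ hs2 hq20 hδε1 hb0
    exact_mod_cast h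
  have hAsub : ((V₁ ∩ V₁').card : ℝ) ≤ (V₁'.card : ℝ) := by
    exact_mod_cast card_le_card (inter_subset_right (s₁ := V₁) (s₂ := V₁'))
  have hBsub : ((V₂ ∩ V₂').card : ℝ) ≤ (V₂'.card : ℝ) := by
    exact_mod_cast card_le_card (inter_subset_right (s₁ := V₂) (s₂ := V₂'))
  have ha'lb : (1 - δ * ε) * (V₁.card : ℝ) ≤ (V₁'.card : ℝ) :=
    arith_lb _ _ _ _ _ _ hAcard hAsub hs1 hq10
  have hb'lb : (1 - δ * ε) * (V₂.card : ℝ) ≤ (V₂'.card : ℝ) :=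
    arith_lb _ _ _ _ _ _ hBcard hBsub hs2 hq20
  -- X'' = X' ∩ V₁, Y'' = Y' ∩ V₂
  have hXE : X' \ (X' ∩ V₁) = X' \ V₁ := sdiff_inter_self_left X' V₁
  have hYE : Y' \ (Y' ∩ V₂) = Y' \ V₂ := sdiff_inter_self_left Y' V₂
  have hcX : ((X' \ (X' ∩ V₁)).card : ℝ) ≤ δ * ε * (V₁.card : ℝ) := by
    rw [hXE]
    have h1 : ((X' \ V₁).card : ℝ) ≤ ((V₁' \ V₁).card : ℝ) := by
      exact_mod_cast card_le_card (sdiff_subset_sdiff hX'sub Subset.rfl)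
    linarith
  have hcY : ((Y' \ (Y' ∩ V₂)).card : ℝ) ≤ δ * ε * (V₂.card : ℝ) := by
    rw [hYE]
    have h1 : ((Y' \ V₂).card : ℝ) ≤ ((V₂' \ V₂).card : ℝ) := by
      exact_mod_cast card_le_card (sdiff_subset_sdiff hY'sub Subset.rfl)
    linarith
  have hX''card : ((X' ∩ V₁).card : ℝ) = (X'.card : ℝ) - ((X' \ (X' ∩ V₁)).card : ℝ) := by
    have h := card_sdiff_add_card_eq_card (inter_subset_left (s₁ := X') (s₂ := V₁))
    have h' : ((X' \ (X' ∩ V₁)).card : ℝ) + ((X' ∩ V₁).card : ℝ) = (X'.card : ℝ) := by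
      exact_mod_cast h
    linarith
  have hY''card : ((Y' ∩ V₂).card : ℝ) = (Y'.card : ℝ) - ((Y' \ (Y' ∩ V₂)).card : ℝ) := by
    have h := card_sdiff_add_card_eq_card (inter_subset_left (s₁ := Y') (s₂ := V₂))
    have h' : ((Y' \ (Y' ∩ V₂)).card : ℝ) + ((Y' ∩ V₂).card : ℝ) = (Y'.card : ℝ) := by
      exact_mod_cast h
    linarith
  have hxlb : (ε + 4 * δ) * ((1 - δ * ε) * (V₁.card : ℝ)) ≤ (X'.card : ℝ) :=
    le_trans (mul_le_mul_of_nonneg_left ha'lb hε'0.le) hX'card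
  have hylb : (ε + 4 * δ) * ((1 - δ * ε) * (V₂.card : ℝ)) ≤ (Y'.card : ℝ) :=
    le_trans (mul_le_mul_of_nonneg_left hb'lb hε'0.le) hY'card
  have hx''lb : ε * (V₁.card : ℝ) ≤ ((X' ∩ V₁).card : ℝ) := by
    rw [hX''card]
    exact arith_eps1 ε δ _ _ _ hε0 hε1 hδ hε'1 ha0.le hcX hxlb
  have hy''lb : ε * (V₂.card : ℝ) ≤ ((Y' ∩ V₂).card : ℝ) := by
    rw [hY''card]
    exact arith_eps1 ε δ _ _ _ hε0 hε1 hδ hε'1 hb0.le hcY hylb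
  have hX''ne : (X' ∩ V₁).Nonempty := by
    rw [← card_pos]
    have h : (0:ℝ) < ((X' ∩ V₁).card : ℝ) := lt_of_lt_of_le (by positivity) hx''lb
    exact_mod_cast h
  have hY''ne : (Y' ∩ V₂).Nonempty := by
    rw [← card_pos]
    have h : (0:ℝ) < ((Y' ∩ V₂).card : ℝ) := lt_of_lt_of_le (by positivity) hy''lb
    exact_mod_cast h
  -- regularity on (X'', Y'')
  have hregXY : |dens G (X' ∩ V₁) (Y' ∩ V₂) - dens G V₁ V₂| ≤ ε :=
    hreg inter_subset_right inter_subset_right hx''lb hy''lb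
  -- three perturbation estimates
  have D1 := dens_pert G (inter_subset_left (s₁ := X') (s₂ := V₁))
    (inter_subset_left (s₁ := Y') (s₂ := V₂)) hX''ne hY''ne
  have D2 := dens_pert G (inter_subset_left (s₁ := V₁) (s₂ := V₁'))
    (inter_subset_left (s₁ := V₂) (s₂ := V₂')) hAne hBne
  have D3 := dens_pert G (inter_subset_right (s₁ := V₁) (s₂ := V₁'))
    (inter_subset_right (s₁ := V₂) (s₂ := V₂')) hAne hBne
  rw [hE1, hE2] at D2
  rw [hE1', hE2'] at D3
  -- quotient bounds
  have Q1 : ((X' \ (X' ∩ V₁)).card : ℝ) / (X'.card : ℝ)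
      ≤ δ * ε / ((ε + 4 * δ) * (1 - δ * ε)) :=
    arith_Q ε δ _ _ _ hδε0 hε'0 hs hx0 ha0.le hcX hxlb
  have Q2 : ((Y' \ (Y' ∩ V₂)).card : ℝ) / (Y'.card : ℝ)
      ≤ δ * ε / ((ε + 4 * δ) * (1 - δ * ε)) :=
    arith_Q ε δ _ _ _ hδε0 hε'0 hs hy0 hb0.le hcY hylb
  have Q3 : ((V₁ \ V₁').card : ℝ) / (V₁.card : ℝ) + ((V₁' \ V₁).card : ℝ) / (V₁'.card : ℝ)
      ≤ δ * ε / (1 - δ * ε) :=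
    arith_Q34 _ _ _ _ _ hδε0 hs ha0 ha'0 hp10 hq10 hs1 ha'lb
  have Q4 : ((V₂ \ V₂').card : ℝ) / (V₂.card : ℝ) + ((V₂' \ V₂).card : ℝ) / (V₂'.card : ℝ)
      ≤ δ * ε / (1 - δ * ε) :=
    arith_Q34 _ _ _ _ _ hδε0 hs hb0 hb'0 hp20 hq20 hs2 hb'lb
  have hKsum := arith_K ε δ hε0 hε1 hδ hε'1
  -- triangle inequality chain
  have t1 := abs_sub_le (dens G X' Y') (dens G (X' ∩ V₁) (Y' ∩ V₂)) (dens G V₁' V₂')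
  have t2 := abs_sub_le (dens G (X' ∩ V₁) (Y' ∩ V₂)) (dens G V₁ V₂) (dens G V₁' V₂')
  have t3 := abs_sub_le (dens G V₁ V₂) (dens G (V₁ ∩ V₁') (V₂ ∩ V₂')) (dens G V₁' V₂')
  have t4 : |dens G (V₁ ∩ V₁') (V₂ ∩ V₂') - dens G V₁' V₂'|
      = |dens G V₁' V₂' - dens G (V₁ ∩ V₁') (V₂ ∩ V₂')| := abs_sub_comm _ _
  linarith
end

section
/- Interval regularity lemma for functions: Let 0 < ε ≤ 1 and let m be a positive integer. Set q = ⌈16·ε^{-3}⌉. For every measurable function f : [0,1]² → [0,1] there exists an integer i with 0 ≤ i < ⌈4·ε^{-5}⌉ such that, with k = m·q^i, the partition of [0,1] into the k equal-length intervals [0,1/k), [1/k,2/k), …, [(k−1)/k, 1] is interval ε-regular for f. In particular, there is some integer k with m ≤ k ≤ m·⌈16·ε^{-3}⌉^{⌈4·ε^{-5}⌉} for which the partition of [0,1] into k equal-length intervals is interval ε-regular for f. -/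
open Finset MeasureTheory

/-- Normalized integral density `d_f(A,B) = (∫_{A×B} f) / (λ(A) λ(B))`. -/
noncomputable def dBox (f : ℝ × ℝ → ℝ) (A B : Set ℝ) : ℝ :=
  (∫ p in A ×ˢ B, f p) / ((volume A).toReal * (volume B).toReal)

/-- The pair of intervals `(I,J)` is interval `ε`-regular for `f`: for all subintervals
`A ⊆ I`, `B ⊆ J` with `λ(A) ≥ ε λ(I)` and `λ(B) ≥ ε λ(J)`,
`|d_f(A,B) - d_f(I,J)| ≤ ε`. -/
def IntervalRegularPair (f : ℝ × ℝ → ℝ) (ε : ℝ) (I J : Set ℝ) : Prop :=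
  ∀ A B : Set ℝ, A ⊆ I → B ⊆ J → A.OrdConnected → B.OrdConnected →
    ε * (volume I).toReal ≤ (volume A).toReal →
    ε * (volume J).toReal ≤ (volume B).toReal →
    |dBox f A B - dBox f I J| ≤ ε

/-- The `i`-th part of the partition of `[0,1]` into `k` equal-length intervals
`[0,1/k), [1/k,2/k), …, [(k-1)/k, 1]`. -/
noncomputable def eqInterval (k : ℕ) (i : Fin k) : Set ℝ :=
  if (i : ℕ) = k - 1 then Set.Icc (((i : ℕ) : ℝ) / k) 1
  else Set.Ico (((i : ℕ) : ℝ) / k) ((((i : ℕ) : ℝ) + 1) / k)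

/-!
Energy increment. The mean square `energy f k` of the densities of `f` on the pairs of cells of
the uniform `k`-partition lies in `[0, 1]` and, by Cauchy–Schwarz, does not decrease when every
cell is cut into `q` subcells. If more than `ε k²` pairs of cells are irregular, it even grows by
more than `ε⁵ / 4`: the witness `(A, B)` of an irregular pair is, up to one subcell at each end, a
union of subcells, so for `q ≥ 16 / ε³` the density on that union of subcells still differs from
the density of the pair by at least `ε / 2`, and this deviation forces a gain in the variance.
Hence one of the first `⌈4 / ε⁵⌉` refinements by `q` is `ε`-regular. The cells `[s/k, (s+1)/k)`
differ from the parts of the given partition by null sets, which do not affect regularity.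
-/

section BoundedIntegrand

variable {α : Type*} [MeasurableSpace α] {μ : Measure α} {f : α → ℝ} {S T : Set α}

lemma integrableOn_of_mem_Icc (hmeas : Measurable f) (hf : ∀ x, f x ∈ Set.Icc (0 : ℝ) 1)
    (hS : μ S ≠ ⊤) : IntegrableOn f S μ :=
  Measure.integrableOn_of_bounded (M := 1) hS hmeas.aestronglyMeasurable <|
    Filter.Eventually.of_forall fun x => by
      rw [Real.norm_eq_abs, abs_of_nonneg (hf x).1]; exact (hf x).2

lemma setIntegral_le_measureReal (hf : ∀ x, f x ∈ Set.Icc (0 : ℝ) 1) (hS : μ S ≠ ⊤) :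
    ∫ x in S, f x ∂μ ≤ μ.real S := by
  have h := norm_setIntegral_le_of_norm_le_const (f := f) hS.lt_top (C := 1) fun x _ => by
    rw [Real.norm_eq_abs, abs_of_nonneg (hf x).1]; exact (hf x).2
  rw [one_mul] at h
  exact (Real.le_norm_self _).trans h

lemma abs_setAverage_sub_setAverage_le (hmeas : Measurable f)
    (hf : ∀ x, f x ∈ Set.Icc (0 : ℝ) 1) (hS : MeasurableSet S) (hST : S ⊆ T) (hT : μ T ≠ ⊤)
    (hS0 : 0 < μ.real S) :
    |(∫ x in T, f x ∂μ) / μ.real T - (∫ x in S, f x ∂μ) / μ.real S| ≤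
      (μ.real T - μ.real S) / μ.real T := by
  have hST' : μ.real S ≤ μ.real T := measureReal_mono hST hT
  have hT0 : 0 < μ.real T := hS0.trans_le hST'
  set I := ∫ x in S, f x ∂μ
  set J := ∫ x in T, f x ∂μ
  have hI0 : 0 ≤ I := integral_nonneg fun x => (hf x).1
  have hIS : I ≤ μ.real S := setIntegral_le_measureReal hf (measure_ne_top_of_subset hST hT)
  have hJI : J - I = ∫ x in T \ S, f x ∂μ :=
    (setIntegral_sdiff hS (integrableOn_of_mem_Icc hmeas hf hT) hST).symm
  have hJI0 : 0 ≤ J - I := hJI ▸ integral_nonneg fun x => (hf x).1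
  have hJIle : J - I ≤ μ.real T - μ.real S := by
    rw [hJI, ← measureReal_sdiff hST hS hT]
    exact setIntegral_le_measureReal hf (measure_ne_top_of_subset Set.sdiff_subset hT)
  -- `J S - T I = (J - I) S - I (T - S)` is a difference of two terms in `[0, (T - S) S]`
  have hlow : -((μ.real T - μ.real S) * μ.real S) ≤ J * μ.real S - μ.real T * I := by
    nlinarith [mul_le_mul_of_nonneg_right hIS (sub_nonneg.2 hST'), mul_nonneg hJI0 hS0.le]
  have hupp : J * μ.real S - μ.real T * I ≤ (μ.real T - μ.real S) * μ.real S := by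
    nlinarith [mul_le_mul_of_nonneg_right hJIle hS0.le, mul_nonneg hI0 (sub_nonneg.2 hST')]
  rw [div_sub_div _ _ hT0.ne' hS0.ne', abs_div, abs_of_pos (mul_pos hT0 hS0),
    div_le_div_iff₀ (mul_pos hT0 hS0) hT0]
  calc |J * μ.real S - μ.real T * I| * μ.real T
      ≤ (μ.real T - μ.real S) * μ.real S * μ.real T := by gcongr; exact abs_le.2 ⟨hlow, hupp⟩
    _ = (μ.real T - μ.real S) * (μ.real T * μ.real S) := by ring

end BoundedIntegrand

section Density

variable {f : ℝ × ℝ → ℝ} {A B A' B' : Set ℝ}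

lemma volume_prod_ne_top (hA : volume A ≠ ⊤) (hB : volume B ≠ ⊤) : volume (A ×ˢ B) ≠ ⊤ := by
  rw [Measure.volume_eq_prod, Measure.prod_prod]
  exact ENNReal.mul_ne_top hA hB

lemma measureReal_volume_prod (A B : Set ℝ) :
    volume.real (A ×ˢ B) = volume.real A * volume.real B := by
  rw [Measure.volume_eq_prod, measureReal_prod_prod]

lemma dBox_eq_div_measureReal (f : ℝ × ℝ → ℝ) (A B : Set ℝ) :
    dBox f A B = (∫ p in A ×ˢ B, f p) / volume.real (A ×ˢ B) := by
  rw [measureReal_volume_prod]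
  rfl

lemma dBox_nonneg (hf : ∀ p, f p ∈ Set.Icc (0 : ℝ) 1) : 0 ≤ dBox f A B :=
  div_nonneg (integral_nonneg fun p => (hf p).1) (by positivity)

lemma dBox_le_one (hf : ∀ p, f p ∈ Set.Icc (0 : ℝ) 1) (hA : volume A ≠ ⊤)
    (hB : volume B ≠ ⊤) : dBox f A B ≤ 1 := by
  rw [dBox_eq_div_measureReal]
  exact div_le_one_of_le₀ (setIntegral_le_measureReal hf (volume_prod_ne_top hA hB))
    measureReal_nonneg

lemma abs_dBox_sub_dBox_le (hmeas : Measurable f) (hf : ∀ p, f p ∈ Set.Icc (0 : ℝ) 1)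
    (hA : MeasurableSet A) (hB : MeasurableSet B) (hAA' : A ⊆ A') (hBB' : B ⊆ B')
    (hA' : volume A' ≠ ⊤) (hB' : volume B' ≠ ⊤) (hAB : 0 < volume.real A * volume.real B) :
    |dBox f A' B' - dBox f A B| ≤
      (volume.real A' * volume.real B' - volume.real A * volume.real B) /
        (volume.real A' * volume.real B') := by
  rw [dBox_eq_div_measureReal, dBox_eq_div_measureReal, ← measureReal_volume_prod,
    ← measureReal_volume_prod]
  exact abs_setAverage_sub_setAverage_le hmeas hf (hA.prod hB) (Set.prod_mono hAA' hBB')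
    (volume_prod_ne_top hA' hB') (by rwa [measureReal_volume_prod])

lemma dBox_congr_ae (f : ℝ × ℝ → ℝ) (hA : A =ᵐ[volume] A') (hB : B =ᵐ[volume] B') :
    dBox f A B = dBox f A' B' := by
  rw [dBox, dBox, measure_congr hA, measure_congr hB, setIntegral_congr_set]
  rw [Measure.volume_eq_prod]
  exact Measure.set_prod_ae_eq hA hB

lemma IntervalRegularPair.of_ae_eq {f : ℝ × ℝ → ℝ} {ε : ℝ} {I J I' J' : Set ℝ}
    (h : IntervalRegularPair f ε I' J') (hI : I' =ᵐ[volume] I) (hJ : J' =ᵐ[volume] J)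
    (hI' : I'.OrdConnected) (hJ' : J'.OrdConnected) : IntervalRegularPair f ε I J := by
  intro A B hAI hBJ hA hB hAvol hBvol
  have hAI' : (A ∩ I' : Set ℝ) =ᵐ[volume] A := by
    simpa only [Set.inter_eq_left.2 hAI] using (ae_eq_refl A).inter hI
  have hBJ' : (B ∩ J' : Set ℝ) =ᵐ[volume] B := by
    simpa only [Set.inter_eq_left.2 hBJ] using (ae_eq_refl B).inter hJ
  rw [← dBox_congr_ae f hAI' hBJ', ← dBox_congr_ae f hI hJ]
  refine h _ _ Set.inter_subset_right Set.inter_subset_right (hA.inter hI') (hB.inter hJ') ?_ ?_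
  · rwa [measure_congr hAI', measure_congr hI]
  · rwa [measure_congr hBJ', measure_congr hJ]

end Density

noncomputable def cell (n s : ℕ) : Set ℝ := Set.Ico ((s : ℝ) / n) (((s : ℝ) + 1) / n)

def subcells (q i : ℕ) : Finset ℕ := Ico (i * q) (i * q + q)

section Cells

variable {n k q s t : ℕ}

lemma card_subcells (q i : ℕ) : #(subcells q i) = q := by
  rw [subcells, Nat.card_Ico, Nat.add_sub_cancel_left]

lemma measurableSet_cell (n s : ℕ) : MeasurableSet (cell n s) := measurableSet_Ico

lemma ordConnected_cell (n s : ℕ) : (cell n s).OrdConnected := Set.ordConnected_Ico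

lemma volume_cell (n s : ℕ) : volume (cell n s) = ENNReal.ofReal (1 / n) := by
  rw [cell, Real.volume_Ico]
  ring_nf

lemma volume_cell_ne_top (n s : ℕ) : volume (cell n s) ≠ ⊤ := by
  rw [volume_cell]
  exact ENNReal.ofReal_ne_top

lemma measureReal_cell (n s : ℕ) : volume.real (cell n s) = 1 / n := by
  rw [measureReal_def, volume_cell, ENNReal.toReal_ofReal (by positivity)]

lemma lt_of_mem_cell_of_mem_cell {x y : ℝ} (hst : s < t) (hx : x ∈ cell n s)
    (hy : y ∈ cell n t) : x < y :=
  calc x < ((s : ℝ) + 1) / n := hx.2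
    _ ≤ (t : ℝ) / n := by gcongr; exact_mod_cast hst
    _ ≤ y := hy.1

lemma pairwise_disjoint_cell (n : ℕ) : Pairwise (Function.onFun Disjoint (cell n)) := by
  intro s t hst
  rw [Function.onFun, Set.disjoint_left]
  intro x hs ht
  rcases hst.lt_or_gt with h | h
  · exact lt_irrefl x (lt_of_mem_cell_of_mem_cell h hs ht)
  · exact lt_irrefl x (lt_of_mem_cell_of_mem_cell h ht hs)

lemma cell_subset_cell {i : ℕ} (hq : 0 < q) (hs : s ∈ subcells q i) :
    cell (k * q) s ⊆ cell k i := by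
  obtain ⟨his, hsi⟩ := mem_Ico.1 hs
  have hq' : (q : ℝ) ≠ 0 := by positivity
  rintro x ⟨hx₁, hx₂⟩
  constructor
  · calc (i : ℝ) / k = ((i * q : ℕ) : ℝ) / ((k * q : ℕ) : ℝ) := by
          push_cast; rw [mul_div_mul_right _ _ hq']
      _ ≤ (s : ℝ) / ((k * q : ℕ) : ℝ) := by gcongr
      _ ≤ x := hx₁
  · calc x < ((s : ℝ) + 1) / ((k * q : ℕ) : ℝ) := hx₂
      _ ≤ ((i * q + q : ℕ) : ℝ) / ((k * q : ℕ) : ℝ) := by gcongr; exact_mod_cast hsi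
      _ = ((i : ℝ) + 1) / k := by push_cast; rw [← add_one_mul, mul_div_mul_right _ _ hq']

lemma cell_eq_biUnion_cell (hk : 0 < k) (hq : 0 < q) (i : ℕ) :
    cell k i = ⋃ s ∈ subcells q i, cell (k * q) s := by
  refine subset_antisymm (fun x ⟨hx₁, hx₂⟩ => ?_)
    (Set.iUnion₂_subset fun s hs => cell_subset_cell hq hs)
  have hkq : (0 : ℝ) < ((k * q : ℕ) : ℝ) := by positivity
  have hx : 0 ≤ x * ((k * q : ℕ) : ℝ) := mul_nonneg ((by positivity : (0 : ℝ) ≤ i / k).trans hx₁)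
    hkq.le
  have hxk₁ : ((i * q : ℕ) : ℝ) ≤ x * ((k * q : ℕ) : ℝ) := by
    rw [div_le_iff₀ (by positivity)] at hx₁
    push_cast
    nlinarith
  have hxk₂ : x * ((k * q : ℕ) : ℝ) < ((i * q + q : ℕ) : ℝ) := by
    rw [lt_div_iff₀ (by positivity)] at hx₂
    push_cast
    nlinarith [mul_lt_mul_of_pos_right hx₂ (by positivity : (0 : ℝ) < q)]
  refine Set.mem_biUnion (x := ⌊x * ((k * q : ℕ) : ℝ)⌋₊)
    (mem_Ico.2 ⟨Nat.le_floor hxk₁, (Nat.floor_lt hx).2 hxk₂⟩) ⟨?_, ?_⟩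
  · exact (div_le_iff₀ hkq).2 (Nat.floor_le hx)
  · exact (lt_div_iff₀ hkq).2 (Nat.lt_floor_add_one _)

lemma volume_biUnion_cell_ne_top (n : ℕ) (S : Finset ℕ) : volume (⋃ s ∈ S, cell n s) ≠ ⊤ :=
  ne_top_of_le_ne_top (ENNReal.sum_ne_top.2 fun s _ => volume_cell_ne_top n s)
    (measure_biUnion_finset_le S _)

lemma measureReal_biUnion_cell (n : ℕ) (S : Finset ℕ) :
    volume.real (⋃ s ∈ S, cell n s) = #S / n := by
  rw [measureReal_biUnion_finset ((pairwise_disjoint_cell n).set_pairwise _)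
    (fun s _ => measurableSet_cell n s) (fun s _ => volume_cell_ne_top n s)]
  simp only [measureReal_cell, sum_const, nsmul_eq_mul, mul_one_div]

end Cells

section CellDensities

variable {f : ℝ × ℝ → ℝ}

lemma setIntegral_biUnion_cell_prod (hmeas : Measurable f) (hf : ∀ p, f p ∈ Set.Icc (0 : ℝ) 1)
    (n : ℕ) (S T : Finset ℕ) :
    ∫ p in (⋃ s ∈ S, cell n s) ×ˢ (⋃ t ∈ T, cell n t), f p =
      ∑ s ∈ S, ∑ t ∈ T, ∫ p in cell n s ×ˢ cell n t, f p := by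
  rw [Set.iUnion₂_prod_const, integral_biUnion_finset S
    (fun s _ => (measurableSet_cell n s).prod (T.measurableSet_biUnion fun t _ =>
      measurableSet_cell n t))
    (fun s _ s' _ h => Set.disjoint_prod.2 (Or.inl (pairwise_disjoint_cell n h)))
    (fun s _ => integrableOn_of_mem_Icc hmeas hf
      (volume_prod_ne_top (volume_cell_ne_top n s) (volume_biUnion_cell_ne_top n T)))]
  refine sum_congr rfl fun s _ => ?_
  rw [Set.prod_iUnion₂, integral_biUnion_finset T
    (fun t _ => (measurableSet_cell n s).prod (measurableSet_cell n t))
    (fun t _ t' _ h => Set.disjoint_prod.2 (Or.inr (pairwise_disjoint_cell n h)))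
    (fun t _ => integrableOn_of_mem_Icc hmeas hf
      (volume_prod_ne_top (volume_cell_ne_top n s) (volume_cell_ne_top n t)))]

lemma dBox_cell (f : ℝ × ℝ → ℝ) (n s t : ℕ) :
    dBox f (cell n s) (cell n t) = n ^ 2 * ∫ p in cell n s ×ˢ cell n t, f p := by
  rw [dBox, ← measureReal_def, ← measureReal_def, measureReal_cell, measureReal_cell]
  simp only [div_eq_mul_inv, mul_inv, inv_inv]
  ring

lemma dBox_biUnion_cell (hmeas : Measurable f) (hf : ∀ p, f p ∈ Set.Icc (0 : ℝ) 1)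
    (n : ℕ) (S T : Finset ℕ) :
    dBox f (⋃ s ∈ S, cell n s) (⋃ t ∈ T, cell n t) =
      (∑ s ∈ S, ∑ t ∈ T, dBox f (cell n s) (cell n t)) / (#S * #T) := by
  simp only [dBox_cell, ← mul_sum]
  rw [dBox, ← measureReal_def, ← measureReal_def, measureReal_biUnion_cell,
    measureReal_biUnion_cell, setIntegral_biUnion_cell_prod hmeas hf]
  simp only [div_eq_mul_inv, mul_inv, inv_inv]
  ring

lemma sum_dBox_subcells {k q : ℕ} (hmeas : Measurable f) (hf : ∀ p, f p ∈ Set.Icc (0 : ℝ) 1)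
    (hk : 0 < k) (hq : 0 < q) (i j : ℕ) :
    ∑ p ∈ subcells q i ×ˢ subcells q j, dBox f (cell (k * q) p.1) (cell (k * q) p.2) =
      #(subcells q i ×ˢ subcells q j) * dBox f (cell k i) (cell k j) := by
  have hq' : (q : ℝ) ≠ 0 := by positivity
  rw [sum_product, cell_eq_biUnion_cell hk hq i, cell_eq_biUnion_cell hk hq j,
    dBox_biUnion_cell hmeas hf, card_product]
  simp only [card_subcells]
  push_cast
  field_simp

end CellDensities

lemma card_mul_sq_add_card_mul_sq_le_sum_sq {ι : Type*} {P Q : Finset ι} (hQP : Q ⊆ P)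
    (g : ι → ℝ) {D c : ℝ} (hP : ∑ p ∈ P, g p = #P * D) (hQ : ∑ p ∈ Q, g p = #Q * c) :
    #P * D ^ 2 + #Q * (c - D) ^ 2 ≤ ∑ p ∈ P, g p ^ 2 := by
  have hvar : ∑ p ∈ P, (g p - D) ^ 2 = ∑ p ∈ P, g p ^ 2 - #P * D ^ 2 := by
    simp only [sub_sq, sum_add_distrib, sum_sub_distrib, ← sum_mul, ← mul_sum, hP, sum_const,
      nsmul_eq_mul]
    ring
  have hQD : ∑ p ∈ Q, (g p - D) = #Q * (c - D) := by
    rw [sum_sub_distrib, hQ, sum_const, nsmul_eq_mul]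
    ring
  have hCS : #Q * (#Q * (c - D) ^ 2) ≤ #Q * ∑ p ∈ Q, (g p - D) ^ 2 := by
    have h := sq_sum_le_card_mul_sum_sq (s := Q) (f := fun p => g p - D)
    rw [hQD] at h
    linarith
  have hQP' : ∑ p ∈ Q, (g p - D) ^ 2 ≤ ∑ p ∈ P, (g p - D) ^ 2 :=
    sum_le_sum_of_subset_of_nonneg hQP fun _ _ _ => sq_nonneg _
  have hQ' : #Q * (c - D) ^ 2 ≤ ∑ p ∈ Q, (g p - D) ^ 2 := by
    rcases (Nat.cast_nonneg (α := ℝ) #Q).eq_or_lt with h | h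
    · rw [← h, zero_mul]
      exact sum_nonneg fun _ _ => sq_nonneg _
    · exact le_of_mul_le_mul_left hCS h
  linarith

lemma volume_biUnion_cell_le_of_inter_nonempty {n : ℕ} {A : Set ℝ} (hA : A.OrdConnected)
    {S : Finset ℕ} (hS : ∀ s ∈ S, (A ∩ cell n s).Nonempty) :
    volume (⋃ s ∈ S, cell n s) ≤ volume A + 2 * ENNReal.ofReal (1 / n) := by
  rcases S.eq_empty_or_nonempty with rfl | hne
  · simp
  obtain ⟨y₀, hy₀A, hy₀⟩ := hS _ (S.min'_mem hne)
  obtain ⟨y₁, hy₁A, hy₁⟩ := hS _ (S.max'_mem hne)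
  -- every cell strictly between the two extreme ones lies between `y₀` and `y₁`, hence in `A`
  have hsub : ⋃ s ∈ S, cell n s ⊆ A ∪ cell n (S.min' hne) ∪ cell n (S.max' hne) := by
    refine Set.iUnion₂_subset fun s hs x hx => ?_
    rcases (S.min'_le s hs).eq_or_lt with h₀ | h₀
    · exact Or.inl (Or.inr (h₀ ▸ hx))
    rcases (S.le_max' s hs).eq_or_lt with h₁ | h₁
    · exact Or.inr (h₁ ▸ hx)
    exact Or.inl (Or.inl (hA.out hy₀A hy₁A ⟨(lt_of_mem_cell_of_mem_cell h₀ hy₀ hx).le,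
      (lt_of_mem_cell_of_mem_cell h₁ hx hy₁).le⟩))
  calc volume (⋃ s ∈ S, cell n s)
      ≤ volume A + volume (cell n (S.min' hne)) + volume (cell n (S.max' hne)) :=
        (measure_mono hsub).trans <|
          (measure_union_le _ _).trans (add_le_add_left (measure_union_le _ _) _)
    _ = volume A + 2 * ENNReal.ofReal (1 / n) := by
        rw [volume_cell, volume_cell, two_mul, add_assoc]

lemma exists_subcells_cover {k q i : ℕ} (hk : 0 < k) (hq : 0 < q) {A : Set ℝ}
    (hAi : A ⊆ cell k i) (hA : A.OrdConnected) :
    ∃ S ⊆ subcells q i, A ⊆ ⋃ s ∈ S, cell (k * q) s ∧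
      volume.real (⋃ s ∈ S, cell (k * q) s) ≤ volume.real A + 2 / (k * q) := by
  classical
  refine ⟨{s ∈ subcells q i | (A ∩ cell (k * q) s).Nonempty}, filter_subset _ _, ?_, ?_⟩
  · intro x hx
    obtain ⟨s, hs, hxs⟩ := Set.mem_iUnion₂.1 (cell_eq_biUnion_cell hk hq i ▸ hAi hx)
    exact Set.mem_iUnion₂.2 ⟨s, mem_filter.2 ⟨hs, x, hx, hxs⟩, hxs⟩
  · have hA' : volume A ≠ ⊤ := measure_ne_top_of_subset hAi (volume_cell_ne_top k i)
    refine ENNReal.toReal_le_of_le_ofReal (by positivity) ?_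
    calc _ ≤ volume A + 2 * ENNReal.ofReal (1 / ((k * q : ℕ) : ℝ)) :=
          volume_biUnion_cell_le_of_inter_nonempty hA fun s hs => (mem_filter.1 hs).2
      _ = ENNReal.ofReal (volume.real A + 2 / (k * q)) := by
          rw [ENNReal.ofReal_add measureReal_nonneg (by positivity), ofReal_measureReal hA',
            show (2 : ℝ) / (k * q) = 2 * (1 / ((k * q : ℕ) : ℝ)) by push_cast; ring,
            ENNReal.ofReal_mul (by norm_num), ENNReal.ofReal_ofNat]

lemma relative_area_excess_le {ε k q a b a' b' : ℝ} (hε : 0 < ε) (hk : 0 < k)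
    (hq : 16 ≤ q * ε ^ 3) (ha : ε / k ≤ a) (hb : ε / k ≤ b) (haa' : a ≤ a') (hbb' : b ≤ b')
    (ha' : a' ≤ 1 / k) (hb' : b' ≤ 1 / k) (ha'' : a' ≤ a + 2 / (k * q))
    (hb'' : b' ≤ b + 2 / (k * q)) :
    (a' * b' - a * b) / (a' * b') ≤ ε / 4 := by
  have hq0 : 0 < q := by
    by_contra h
    nlinarith [pow_pos hε 3]
  have hnum : a' * b' - a * b ≤ 4 / (k ^ 2 * q) := by
    have h₁ : a' * (b' - b) ≤ 1 / k * (2 / (k * q)) :=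
      mul_le_mul ha' (by linarith) (by linarith) (by positivity)
    have h₂ : b * (a' - a) ≤ 1 / k * (2 / (k * q)) :=
      mul_le_mul (hbb'.trans hb') (by linarith) (by linarith) (by positivity)
    calc a' * b' - a * b = a' * (b' - b) + b * (a' - a) := by ring
      _ ≤ 1 / k * (2 / (k * q)) + 1 / k * (2 / (k * q)) := add_le_add h₁ h₂
      _ = 4 / (k ^ 2 * q) := by field_simp; ring
  have hden : ε ^ 2 / k ^ 2 ≤ a' * b' :=
    calc ε ^ 2 / k ^ 2 = ε / k * (ε / k) := by ring
      _ ≤ a' * b' := mul_le_mul (ha.trans haa') (hb.trans hbb') (by positivity)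
          ((ha.trans haa').trans' (by positivity))
  calc (a' * b' - a * b) / (a' * b') ≤ 4 / (k ^ 2 * q) / (ε ^ 2 / k ^ 2) :=
        div_le_div₀ (by positivity) hnum (by positivity) hden
    _ = 4 / (q * ε ^ 2) := by field_simp
    _ ≤ ε / 4 := by
        rw [div_le_div_iff₀ (by positivity) (by norm_num)]
        nlinarith

section Increment

variable {f : ℝ × ℝ → ℝ} {k q : ℕ}

lemma sq_mul_sq_dBox_le_sum_sq (hmeas : Measurable f) (hf : ∀ p, f p ∈ Set.Icc (0 : ℝ) 1)
    (hk : 0 < k) (hq : 0 < q) (i j : ℕ) :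
    q ^ 2 * dBox f (cell k i) (cell k j) ^ 2 ≤
      ∑ s ∈ subcells q i, ∑ t ∈ subcells q j, dBox f (cell (k * q) s) (cell (k * q) t) ^ 2 := by
  have h := card_mul_sq_add_card_mul_sq_le_sum_sq (empty_subset _) _
    (sum_dBox_subcells hmeas hf hk hq i j) (c := 0) (by simp)
  simp only [card_empty, Nat.cast_zero, zero_mul, add_zero, card_product, card_subcells,
    sum_product] at h
  convert h using 2
  push_cast
  ring

lemma mul_le_card_of_div_le_measureReal (hk : 0 < k) (hq : 0 < q) {ε : ℝ} {S : Finset ℕ}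
    (hS : ε / k ≤ volume.real (⋃ s ∈ S, cell (k * q) s)) : ε * q ≤ #S := by
  rw [measureReal_biUnion_cell, div_le_div_iff₀ (by positivity) (by positivity)] at hS
  push_cast at hS
  nlinarith [(by positivity : (0 : ℝ) < k)]

lemma exists_subcells_far_of_not_regular (hmeas : Measurable f)
    (hf : ∀ p, f p ∈ Set.Icc (0 : ℝ) 1) {ε : ℝ} (hε : 0 < ε) (hk : 0 < k)
    (hq : 16 ≤ q * ε ^ 3) {i j : ℕ} (hij : ¬ IntervalRegularPair f ε (cell k i) (cell k j)) :
    ∃ SA ⊆ subcells q i, ∃ SB ⊆ subcells q j, ε * q ≤ #SA ∧ ε * q ≤ #SB ∧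
      ε / 2 ≤ |dBox f (⋃ s ∈ SA, cell (k * q) s) (⋃ t ∈ SB, cell (k * q) t) -
        dBox f (cell k i) (cell k j)| := by
  have hq0 : 0 < q := Nat.pos_of_ne_zero fun h => by norm_num [h] at hq
  simp only [IntervalRegularPair, not_forall, not_le, ← measureReal_def, measureReal_cell,
    mul_one_div] at hij
  obtain ⟨A, B, hAi, hBj, hA, hB, hA₀, hB₀, hfar⟩ := hij
  obtain ⟨SA, hSA, hAU, hUA⟩ := exists_subcells_cover hk hq0 hAi hA
  obtain ⟨SB, hSB, hBU, hUB⟩ := exists_subcells_cover hk hq0 hBj hB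
  set UA := ⋃ s ∈ SA, cell (k * q) s
  set UB := ⋃ t ∈ SB, cell (k * q) t
  have hUA' : volume.real UA ≤ 1 / k := measureReal_cell k i ▸ measureReal_mono
    (Set.iUnion₂_subset fun s hs => cell_subset_cell hq0 (hSA hs)) (volume_cell_ne_top k i)
  have hUB' : volume.real UB ≤ 1 / k := measureReal_cell k j ▸ measureReal_mono
    (Set.iUnion₂_subset fun s hs => cell_subset_cell hq0 (hSB hs)) (volume_cell_ne_top k j)
  have hAUA : volume.real A ≤ volume.real UA :=
    measureReal_mono hAU (volume_biUnion_cell_ne_top _ _)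
  have hBUB : volume.real B ≤ volume.real UB :=
    measureReal_mono hBU (volume_biUnion_cell_ne_top _ _)
  have hclose : |dBox f UA UB - dBox f A B| ≤ ε / 4 :=
    (abs_dBox_sub_dBox_le hmeas hf hA.measurableSet hB.measurableSet hAU hBU
      (volume_biUnion_cell_ne_top _ _) (volume_biUnion_cell_ne_top _ _)
      (mul_pos (hA₀.trans_lt' (by positivity)) (hB₀.trans_lt' (by positivity)))).trans
    (relative_area_excess_le hε (by positivity) hq hA₀ hB₀ hAUA hBUB hUA' hUB' hUA hUB)
  refine ⟨SA, hSA, SB, hSB, mul_le_card_of_div_le_measureReal hk hq0 (hA₀.trans hAUA),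
    mul_le_card_of_div_le_measureReal hk hq0 (hB₀.trans hBUB), ?_⟩
  have := abs_sub_le (dBox f A B) (dBox f UA UB) (dBox f (cell k i) (cell k j))
  rw [abs_sub_comm] at hclose
  linarith

lemma sq_mul_sq_dBox_add_le_sum_sq_of_not_regular (hmeas : Measurable f)
    (hf : ∀ p, f p ∈ Set.Icc (0 : ℝ) 1) {ε : ℝ} (hε : 0 < ε) (hk : 0 < k)
    (hq : 16 ≤ q * ε ^ 3) {i j : ℕ} (hij : ¬ IntervalRegularPair f ε (cell k i) (cell k j)) :
    q ^ 2 * dBox f (cell k i) (cell k j) ^ 2 + q ^ 2 * ε ^ 4 / 4 ≤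
      ∑ s ∈ subcells q i, ∑ t ∈ subcells q j, dBox f (cell (k * q) s) (cell (k * q) t) ^ 2 := by
  have hq0 : 0 < q := Nat.pos_of_ne_zero fun h => by norm_num [h] at hq
  obtain ⟨SA, hSA, SB, hSB, hSA', hSB', hgap⟩ :=
    exists_subcells_far_of_not_regular hmeas hf hε hk hq hij
  have hSASB : (0 : ℝ) < #SA * #SB :=
    mul_pos (hSA'.trans_lt' (by positivity)) (hSB'.trans_lt' (by positivity))
  have hvar := card_mul_sq_add_card_mul_sq_le_sum_sq (product_subset_product hSA hSB) _
    (sum_dBox_subcells hmeas hf hk hq0 i j)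
    (c := dBox f (⋃ s ∈ SA, cell (k * q) s) (⋃ t ∈ SB, cell (k * q) t)) (by
      rw [sum_product, dBox_biUnion_cell hmeas hf, card_product, Nat.cast_mul,
        mul_div_cancel₀ _ hSASB.ne'])
  simp only [card_product, card_subcells, sum_product, Nat.cast_mul] at hvar
  have hsq := pow_le_pow_left₀ (by positivity) hgap 2
  rw [sq_abs] at hsq
  calc (q : ℝ) ^ 2 * dBox f (cell k i) (cell k j) ^ 2 + q ^ 2 * ε ^ 4 / 4
      = q * q * dBox f (cell k i) (cell k j) ^ 2 + (ε * q) * (ε * q) * (ε / 2) ^ 2 := by ring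
    _ ≤ _ := add_le_add le_rfl (mul_le_mul (mul_le_mul hSA' hSB' (by positivity)
          (by positivity)) hsq (by positivity) (by positivity))
    _ ≤ _ := hvar

end Increment

noncomputable def energy (f : ℝ × ℝ → ℝ) (k : ℕ) : ℝ :=
  (∑ i ∈ range k, ∑ j ∈ range k, dBox f (cell k i) (cell k j) ^ 2) / k ^ 2

open scoped Classical in
noncomputable def irregularPairs (f : ℝ × ℝ → ℝ) (ε : ℝ) (k : ℕ) : Finset (ℕ × ℕ) :=
  {p ∈ range k ×ˢ range k | ¬ IntervalRegularPair f ε (cell k p.1) (cell k p.2)}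

lemma sum_range_mul_eq_sum_sum_subcells {M : Type*} [AddCommMonoid M] (g : ℕ → M) (k q : ℕ) :
    ∑ s ∈ range (k * q), g s = ∑ i ∈ range k, ∑ s ∈ subcells q i, g s := by
  induction k with
  | zero => simp
  | succ k ih =>
    rw [sum_range_succ, ← ih, subcells, add_mul, one_mul,
      sum_range_add_sum_Ico _ (Nat.le_add_right _ _)]

section Energy

variable {f : ℝ × ℝ → ℝ} {k q : ℕ}

lemma energy_nonneg (f : ℝ × ℝ → ℝ) (k : ℕ) : 0 ≤ energy f k := by
  unfold energy
  positivity

lemma energy_le_one (hf : ∀ p, f p ∈ Set.Icc (0 : ℝ) 1) (hk : 0 < k) : energy f k ≤ 1 := by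
  rw [energy, div_le_one (by positivity)]
  calc ∑ i ∈ range k, ∑ j ∈ range k, dBox f (cell k i) (cell k j) ^ 2
      ≤ ∑ i ∈ range k, ∑ j ∈ range k, (1 : ℝ) := by
        gcongr with i _ j _
        exact pow_le_one₀ (dBox_nonneg hf)
          (dBox_le_one hf (volume_cell_ne_top k i) (volume_cell_ne_top k j))
    _ = k ^ 2 := by simp [sq]

lemma sum_sq_dBox_add_card_irregular_le (hmeas : Measurable f)
    (hf : ∀ p, f p ∈ Set.Icc (0 : ℝ) 1) {ε : ℝ} (hε : 0 < ε) (hk : 0 < k)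
    (hq : 16 ≤ q * ε ^ 3) :
    q ^ 2 * ∑ i ∈ range k, ∑ j ∈ range k, dBox f (cell k i) (cell k j) ^ 2 +
        #(irregularPairs f ε k) * (q ^ 2 * ε ^ 4 / 4) ≤
      ∑ s ∈ range (k * q), ∑ t ∈ range (k * q), dBox f (cell (k * q) s) (cell (k * q) t) ^ 2 := by
  classical
  have hq0 : 0 < q := Nat.pos_of_ne_zero fun h => by norm_num [h] at hq
  have hirr : (#(irregularPairs f ε k) : ℝ) * (q ^ 2 * ε ^ 4 / 4) = ∑ i ∈ range k, ∑ j ∈ range k,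
      if ¬ IntervalRegularPair f ε (cell k i) (cell k j) then (q ^ 2 * ε ^ 4 / 4 : ℝ) else 0 := by
    rw [irregularPairs, ← nsmul_eq_mul, ← sum_const, sum_filter, sum_product]
  simp_rw [hirr, sum_range_mul_eq_sum_sum_subcells _ k q, mul_sum, ← sum_add_distrib]
  refine sum_le_sum fun i _ => ?_
  rw [sum_comm]
  refine sum_le_sum fun j _ => ?_
  split_ifs with hij
  · rw [add_zero]
    exact sq_mul_sq_dBox_le_sum_sq hmeas hf hk hq0 i j
  · exact sq_mul_sq_dBox_add_le_sum_sq_of_not_regular hmeas hf hε hk hq hij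

lemma energy_add_lt_energy_mul (hmeas : Measurable f) (hf : ∀ p, f p ∈ Set.Icc (0 : ℝ) 1)
    {ε : ℝ} (hε : 0 < ε) (hk : 0 < k) (hq : 16 ≤ q * ε ^ 3)
    (hirr : ε * k ^ 2 < #(irregularPairs f ε k)) :
    energy f k + ε ^ 5 / 4 < energy f (k * q) := by
  have hq0 : 0 < q := Nat.pos_of_ne_zero fun h => by norm_num [h] at hq
  have hk' : (0 : ℝ) < k := by positivity
  have hlow := sum_sq_dBox_add_card_irregular_le hmeas hf hε hk hq
  set E := ∑ i ∈ range k, ∑ j ∈ range k, dBox f (cell k i) (cell k j) ^ 2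
  set δ : ℝ := q ^ 2 * ε ^ 4 / 4
  calc energy f k + ε ^ 5 / 4 = (q ^ 2 * E + ε * k ^ 2 * δ) / (k * q) ^ 2 := by
        rw [energy]
        field_simp
        ring
    _ < (q ^ 2 * E + #(irregularPairs f ε k) * δ) / (k * q) ^ 2 := by gcongr
    _ ≤ energy f (k * q) := by
        rw [energy]
        push_cast
        gcongr

end Energy

lemma exists_lt_of_increment_of_le_one {e : ℕ → ℝ} {δ : ℝ} {N : ℕ} {P : ℕ → Prop}
    (h₀ : 0 ≤ e 0) (hN : e N ≤ 1) (hδ : 1 ≤ N * δ) (hstep : ∀ i, ¬ P i → e i + δ < e (i + 1)) :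
    ∃ i < N, P i := by
  by_contra! h
  have hgrow : ∀ i ≤ N, e 0 + i * δ ≤ e i := by
    intro i hi
    induction i with
    | zero => simp
    | succ i ih =>
      have := hstep i (h i (by omega))
      push_cast
      linarith [ih (by omega)]
  obtain ⟨n, rfl⟩ : ∃ n, N = n + 1 :=
    Nat.exists_eq_add_one.2 (Nat.pos_of_ne_zero (by rintro rfl; norm_num at hδ))
  have := hstep n (h n (by omega))
  have := hgrow n (by omega)
  push_cast at hδ
  linarith

lemma cell_ae_eq_eqInterval {k : ℕ} (hk : 0 < k) (i : Fin k) :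
    cell k i =ᵐ[volume] eqInterval k i := by
  rw [eqInterval]
  split_ifs with h
  · have hend : (((i : ℕ) : ℝ) + 1) / k = 1 := by
      rw [div_eq_one_iff_eq (by positivity), h, Nat.cast_sub hk]
      ring
    rw [cell, hend]
    exact Ico_ae_eq_Icc
  · exact ae_eq_refl _

open scoped Classical in
lemma card_irregular_eqInterval_le (f : ℝ × ℝ → ℝ) (ε : ℝ) {k : ℕ} (hk : 0 < k) :
    #{p : Fin k × Fin k | ¬ IntervalRegularPair f ε (eqInterval k p.1) (eqInterval k p.2)} ≤
      #(irregularPairs f ε k) := by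
  refine card_le_card_of_injOn (fun p => ((p.1 : ℕ), (p.2 : ℕ))) ?_ ?_
  · intro p hp
    simp only [coe_filter, mem_univ, true_and] at hp
    simp only [irregularPairs, coe_filter, mem_product, mem_range]
    exact ⟨⟨p.1.is_lt, p.2.is_lt⟩, fun hreg => hp (hreg.of_ae_eq (cell_ae_eq_eqInterval hk _)
      (cell_ae_eq_eqInterval hk _) (ordConnected_cell _ _) (ordConnected_cell _ _))⟩
  · intro p _ p' _ h
    simp only [Prod.mk.injEq] at h
    exact Prod.ext (Fin.ext h.1) (Fin.ext h.2)

lemma le_natCeil_mul_zpow_neg_mul_pow {ε : ℝ} (hε : 0 < ε) (c : ℝ) (n : ℕ) :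
    c ≤ ⌈c * ε ^ (-(n : ℤ))⌉₊ * ε ^ n :=
  calc c = c * ε ^ (-(n : ℤ)) * ε ^ n := by
        rw [zpow_neg, zpow_natCast, mul_assoc, inv_mul_cancel₀ (by positivity), mul_one]
    _ ≤ ⌈c * ε ^ (-(n : ℤ))⌉₊ * ε ^ n := by gcongr; exact Nat.le_ceil _

open scoped Classical in
theorem interval_regularity_for_functions_general (ε : ℝ) (hε0 : 0 < ε)
    (m : ℕ) (hm : 0 < m) (f : ℝ × ℝ → ℝ) (hmeas : Measurable f)
    (hf : ∀ p, f p ∈ Set.Icc (0 : ℝ) 1) :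
    ∃ i k : ℕ, i < ⌈4 * ε ^ (-5 : ℤ)⌉₊ ∧
      k = m * ⌈16 * ε ^ (-3 : ℤ)⌉₊ ^ i ∧
      m ≤ k ∧ k ≤ m * ⌈16 * ε ^ (-3 : ℤ)⌉₊ ^ ⌈4 * ε ^ (-5 : ℤ)⌉₊ ∧
      ((Finset.filter
          (fun p => ¬ IntervalRegularPair f ε (eqInterval k p.1) (eqInterval k p.2))
          (univ : Finset (Fin k × Fin k))).card : ℝ) ≤ ε * (k : ℝ) ^ 2 := by
  set q := ⌈16 * ε ^ (-3 : ℤ)⌉₊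
  set N := ⌈4 * ε ^ (-5 : ℤ)⌉₊
  have hq : 16 ≤ (q : ℝ) * ε ^ 3 := le_natCeil_mul_zpow_neg_mul_pow hε0 16 3
  have hN : 1 ≤ (N : ℝ) * (ε ^ 5 / 4) := by
    have h : 4 ≤ (N : ℝ) * ε ^ 5 := le_natCeil_mul_zpow_neg_mul_pow hε0 4 5
    linarith
  have hq0 : 0 < q := Nat.pos_of_ne_zero fun h => by norm_num [h] at hq
  have hk : ∀ i, 0 < m * q ^ i := fun i => Nat.mul_pos hm (pow_pos hq0 i)
  obtain ⟨i, hiN, hi⟩ := exists_lt_of_increment_of_le_one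
    (e := fun i => energy f (m * q ^ i))
    (P := fun i => (#(irregularPairs f ε (m * q ^ i)) : ℝ) ≤ ε * ((m * q ^ i : ℕ) : ℝ) ^ 2)
    (energy_nonneg f _) (energy_le_one hf (hk N)) hN fun i hi => by
      simpa only [pow_succ, mul_assoc] using
        energy_add_lt_energy_mul hmeas hf hε0 (hk i) hq (not_le.1 hi)
  exact ⟨i, m * q ^ i, hiN, rfl, Nat.le_mul_of_pos_right m (pow_pos hq0 i),
    Nat.mul_le_mul_left m (Nat.pow_le_pow_right hq0 hiN.le),
    (Nat.cast_le.2 (card_irregular_eqInterval_le f ε (hk i))).trans hi⟩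

open scoped Classical in
/-- Interval regularity lemma for functions: there is `i < ⌈4ε⁻⁵⌉` such that with
`k = m ⌈16ε⁻³⌉^i`, all but at most `ε k²` ordered pairs of parts of the partition of `[0,1]`
into `k` equal-length intervals are interval `ε`-regular for `f`; in particular
`m ≤ k ≤ m ⌈16ε⁻³⌉^⌈4ε⁻⁵⌉`. -/
theorem interval_regularity_for_functions (ε : ℝ) (hε0 : 0 < ε) (hε1 : ε ≤ 1)
    (m : ℕ) (hm : 0 < m) (f : ℝ × ℝ → ℝ) (hmeas : Measurable f)
    (hf : ∀ p, f p ∈ Set.Icc (0 : ℝ) 1) :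
    ∃ i k : ℕ, i < ⌈4 * ε ^ (-5 : ℤ)⌉₊ ∧
      k = m * ⌈16 * ε ^ (-3 : ℤ)⌉₊ ^ i ∧
      m ≤ k ∧ k ≤ m * ⌈16 * ε ^ (-3 : ℤ)⌉₊ ^ ⌈4 * ε ^ (-5 : ℤ)⌉₊ ∧
      ((Finset.filter
          (fun p => ¬ IntervalRegularPair f ε (eqInterval k p.1) (eqInterval k p.2))
          (univ : Finset (Fin k × Fin k))).card : ℝ) ≤ ε * (k : ℝ) ^ 2 :=
  interval_regularity_for_functions_general ε hε0 m hm f hmeas hf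
end

section
/- Let f : [0,1]² → [0,1] be a measurable function and let I, I', J, J' ⊆ [0,1] be intervals of positive Lebesgue measure. Let 0 < ε ≤ 1, and let ε' > 0 be a quantity strictly less than each of: ε − 4·λ((I×J) Δ (I'×J'))/(ε²·λ(I)·λ(J)); (λ(I)·ε − λ(I \ I'))/λ(I'); and (λ(J)·ε − λ(J \ J'))/λ(J'). If (I', J') is interval ε'-regular for f, then (I, J) is interval ε-regular for f. -/
/-! For admissible `A ⊆ I`, `B ⊆ J`, the bounds on `ε'` make `(A ∩ I', B ∩ J')` admissible for
the `ε'`-regular pair `(I', J')`. Passing from `A × B` to `(A ∩ I') × (B ∩ J')`, from `I' × J'`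
to `(I ∩ I') × (J ∩ J')`, and from `I × J` to that same box each removes a part of
`(I × J) Δ (I' × J')`, and removing measure `δ` from a set of measure `m` moves the average of a
`[0,1]`-valued function by at most `δ / m`. These three errors and the `ε'` from regularity add
up to at most `ε`. -/

open MeasureTheory

open Set

lemma abs_add_div_add_sub_div_le {c r m t : ℝ} (hm : 0 < m) (hc : c ∈ Icc 0 m)
    (hr : r ∈ Icc 0 t) : |(c + r) / (m + t) - c / m| ≤ t / (m + t) := by
  have hmt : 0 < m + t := by linarith [hr.1.trans hr.2]
  calc |(c + r) / (m + t) - c / m| = |r * m - c * t| / ((m + t) * m) := by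
        rw [div_sub_div _ _ hmt.ne' hm.ne', abs_div, abs_of_pos (mul_pos hmt hm)]
        ring_nf
    _ ≤ t * m / ((m + t) * m) := by
        gcongr
        rw [abs_le]
        constructor <;> nlinarith [hc.1, hc.2, hr.1, hr.2]
    _ = t / (m + t) := mul_div_mul_right _ _ hm.ne'

section SetAverage

variable {α : Type*} [MeasurableSpace α] {μ : Measure α} {f : α → ℝ} {s t : Set α}

lemma measure_ne_top_of_measureReal_pos (h : 0 < μ.real s) : μ s ≠ ⊤ :=
  (ENNReal.toReal_pos_iff.mp h).2.ne

lemma setIntegral_mem_Icc_measureReal (hf : ∀ x, f x ∈ Icc 0 1) (hs : μ s ≠ ⊤) :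
    ∫ x in s, f x ∂μ ∈ Icc 0 (μ.real s) := by
  refine ⟨integral_nonneg fun x => (hf x).1, ?_⟩
  calc ∫ x in s, f x ∂μ ≤ ∫ _ in s, (1 : ℝ) ∂μ :=
        integral_mono_of_nonneg (.of_forall fun x => (hf x).1)
          (integrableOn_const hs) (.of_forall fun x => (hf x).2)
    _ = μ.real s := by rw [setIntegral_const, smul_eq_mul, mul_one]

lemma abs_setAverage_sub_setAverage_inter_le (hf : ∀ x, f x ∈ Icc 0 1)
    (hfm : AEStronglyMeasurable f μ) (ht : MeasurableSet t) (hs : μ s ≠ ⊤)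
    (hst : 0 < μ.real (s ∩ t)) :
    |⨍ x in s, f x ∂μ - ⨍ x in s ∩ t, f x ∂μ| ≤ μ.real (s \ t) / μ.real s := by
  have hfs : IntegrableOn f s μ := Measure.integrableOn_of_bounded hs hfm (M := 1)
    (.of_forall fun x => by rw [Real.norm_of_nonneg (hf x).1]; exact (hf x).2)
  rw [setAverage_eq, setAverage_eq, smul_eq_mul, smul_eq_mul, inv_mul_eq_div, inv_mul_eq_div,
    ← integral_inter_add_sdiff ht hfs, ← measureReal_inter_add_sdiff ht hs]
  exact abs_add_div_add_sub_div_le hst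
    (setIntegral_mem_Icc_measureReal hf (measure_ne_top_of_subset inter_subset_left hs))
    (setIntegral_mem_Icc_measureReal hf (measure_ne_top_of_subset sdiff_subset hs))

lemma mul_lt_measureReal_inter {A I I' : Set α} {ε ε' : ℝ} (hAI : A ⊆ I)
    (hI' : MeasurableSet I') (hI : μ I ≠ ⊤) (hI'pos : 0 < μ.real I')
    (hA : ε * μ.real I ≤ μ.real A)
    (h : ε' < (μ.real I * ε - μ.real (I \ I')) / μ.real I') :
    ε' * μ.real I' < μ.real (A ∩ I') := by
  have hsplit := measureReal_inter_add_sdiff (μ := μ) (s := A) hI'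
    (measure_ne_top_of_subset hAI hI)
  have hdiff : μ.real (A \ I') ≤ μ.real (I \ I') :=
    measureReal_mono (sdiff_subset_sdiff_left hAI) (measure_ne_top_of_subset sdiff_subset hI)
  rw [lt_div_iff₀ hI'pos] at h
  linarith

end SetAverage

section VolumeProd

variable {α β : Type*} [MeasureSpace α] [MeasureSpace β] [SFinite (volume : Measure β)]

lemma volume_real_prod (s : Set α) (t : Set β) :
    volume.real (s ×ˢ t) = volume.real s * volume.real t := by
  rw [Measure.volume_eq_prod, measureReal_prod_prod]

lemma volume_prod_ne_top_s13 {s : Set α} {t : Set β} (hs : volume s ≠ ⊤) (ht : volume t ≠ ⊤) :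
    volume (s ×ˢ t) ≠ ⊤ := by
  rw [Measure.volume_eq_prod, Measure.prod_prod]
  exact ENNReal.mul_ne_top hs ht

end VolumeProd

lemma dBox_eq_setAverage (f : ℝ × ℝ → ℝ) (X Y : Set ℝ) :
    dBox f X Y = ⨍ p in X ×ˢ Y, f p := by
  rw [dBox, setAverage_eq, smul_eq_mul, inv_mul_eq_div, volume_real_prod]
  rfl

lemma abs_dBox_sub_dBox_inter_le {f : ℝ × ℝ → ℝ} (hfm : Measurable f)
    (hf : ∀ p, f p ∈ Icc 0 1) {X Y X' Y' : Set ℝ} {T : Set (ℝ × ℝ)}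
    (hX' : MeasurableSet X') (hY' : MeasurableSet Y') (hX : volume X ≠ ⊤) (hY : volume Y ≠ ⊤)
    (hpos : 0 < volume.real (X ∩ X') * volume.real (Y ∩ Y'))
    (hT : X ×ˢ Y \ X' ×ˢ Y' ⊆ T) (hTfin : volume T ≠ ⊤) :
    |dBox f X Y - dBox f (X ∩ X') (Y ∩ Y')| ≤
      volume.real T / (volume.real X * volume.real Y) := by
  rw [dBox_eq_setAverage, dBox_eq_setAverage, ← prod_inter_prod, ← volume_real_prod]
  refine (abs_setAverage_sub_setAverage_inter_le hf hfm.aestronglyMeasurable (hX'.prod hY')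
    (volume_prod_ne_top_s13 hX hY) (by rwa [prod_inter_prod, volume_real_prod])).trans ?_
  gcongr

/-- In the application `a = λ(A)λ(B)`, `ij = λ(I)λ(J)`, `ij' = λ(I')λ(J')`,
`k = λ(I ∩ I')λ(J ∩ J')` and `D = λ((I × J) Δ (I' × J'))`. -/
lemma nudge_error_le {ε ε' D a ij ij' k : ℝ} (hε : 0 < ε) (hε' : 0 < ε') (hij : 0 < ij)
    (ha : ε ^ 2 * ij ≤ a) (ha' : a ≤ ij) (hD : 0 ≤ D) (hk : ij - k ≤ D) (hk' : k ≤ ij')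
    (h : ε' < ε - 4 * D / (ε ^ 2 * ij)) :
    D / a + ε' + D / ij' + D / ij ≤ ε := by
  have hε2ij : 0 < ε ^ 2 * ij := by positivity
  have hε1 : ε ^ 2 ≤ 1 := le_of_mul_le_mul_right (by linarith) hij
  set q := D / (ε ^ 2 * ij)
  have hq : D = q * (ε ^ 2 * ij) := (div_mul_cancel₀ D hε2ij.ne').symm
  have hDq : 4 * D / (ε ^ 2 * ij) = 4 * q := mul_div_assoc _ _ _
  have hq0 : 0 ≤ q := by positivity
  have hqε : 4 * q < ε := by linarith
  have hεle : ε ≤ 1 := by nlinarith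
  -- `ij' ≥ k ≥ ij - D` and `D < ε³ ij / 4`
  have hij' : ε ^ 2 * ij ≤ 2 * ij' := by nlinarith
  have e1 : D / a ≤ q := div_le_div_of_nonneg_left hD hε2ij ha
  have e2 : D / ij' ≤ 2 * q := by
    rw [div_le_iff₀ (by linarith), hq]; nlinarith
  have e3 : D / ij ≤ q := div_le_div_of_nonneg_left hD hε2ij (by nlinarith)
  linarith

lemma nudge_error_le_of_subset {A B I J I' J' : Set ℝ} {ε ε' D : ℝ} (hε : 0 < ε)
    (hε' : 0 < ε') (hAI : A ⊆ I) (hBJ : B ⊆ J) (hI' : MeasurableSet I') (hJ' : MeasurableSet J')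
    (hIpos : 0 < volume.real I) (hJpos : 0 < volume.real J)
    (hI'fin : volume I' ≠ ⊤) (hJ'fin : volume J' ≠ ⊤)
    (hAvol : ε * volume.real I ≤ volume.real A) (hBvol : ε * volume.real J ≤ volume.real B)
    (hD : volume.real (I ×ˢ J \ I' ×ˢ J') ≤ D)
    (h : ε' < ε - 4 * D / (ε ^ 2 * volume.real I * volume.real J)) :
    D / (volume.real A * volume.real B) + ε' + D / (volume.real I' * volume.real J') +
      D / (volume.real I * volume.real J) ≤ ε := by
  have hIfin := measure_ne_top_of_measureReal_pos hIpos
  have hJfin := measure_ne_top_of_measureReal_pos hJpos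
  have hk : volume.real I * volume.real J - volume.real (I ∩ I') * volume.real (J ∩ J') ≤ D := by
    rwa [← volume_real_prod, ← volume_real_prod, ← prod_inter_prod,
      ← measureReal_inter_add_sdiff (hI'.prod hJ') (volume_prod_ne_top_s13 hIfin hJfin),
      add_sub_cancel_left]
  have hk' : volume.real (I ∩ I') * volume.real (J ∩ J') ≤ volume.real I' * volume.real J' :=
    mul_le_mul (measureReal_mono inter_subset_right hI'fin)
      (measureReal_mono inter_subset_right hJ'fin) measureReal_nonneg measureReal_nonneg
  have hab : ε ^ 2 * (volume.real I * volume.real J) ≤ volume.real A * volume.real B := by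
    nlinarith [mul_le_mul hAvol hBvol (by positivity) measureReal_nonneg]
  have hab' : volume.real A * volume.real B ≤ volume.real I * volume.real J :=
    mul_le_mul (measureReal_mono hAI hIfin) (measureReal_mono hBJ hJfin)
      measureReal_nonneg hIpos.le
  rw [mul_assoc] at h
  exact nudge_error_le hε hε' (mul_pos hIpos hJpos) hab hab' (measureReal_nonneg.trans hD)
    hk hk' h

theorem interval_regular_nudge_general (f : ℝ × ℝ → ℝ) (hmeas : Measurable f)
    (hf : ∀ p, f p ∈ Set.Icc (0 : ℝ) 1)
    (I I' J J' : Set ℝ)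
    (hI : I.OrdConnected) (hI' : I'.OrdConnected)
    (hJ : J.OrdConnected) (hJ' : J'.OrdConnected)
    (hIpos : 0 < (volume I).toReal) (hI'pos : 0 < (volume I').toReal)
    (hJpos : 0 < (volume J).toReal) (hJ'pos : 0 < (volume J').toReal)
    (ε ε' : ℝ) (hε0 : 0 < ε) (hε'0 : 0 < ε')
    (h1 : ε' < ε - 4 * (volume (symmDiff (I ×ˢ J) (I' ×ˢ J'))).toReal /
      (ε ^ 2 * (volume I).toReal * (volume J).toReal))
    (h2 : ε' < ((volume I).toReal * ε - (volume (I \ I')).toReal) / (volume I').toReal)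
    (h3 : ε' < ((volume J).toReal * ε - (volume (J \ J')).toReal) / (volume J').toReal)
    (hreg : IntervalRegularPair f ε' I' J') :
    IntervalRegularPair f ε I J := by
  intro A B hAI hBJ hA hB hAvol hBvol
  simp only [← measureReal_def] at *
  have fin {S : Set ℝ} (h : 0 < volume.real S) : volume S ≠ ⊤ :=
    measure_ne_top_of_measureReal_pos h
  have hA' := mul_lt_measureReal_inter hAI hI'.measurableSet (fin hIpos) hI'pos hAvol h2
  have hB' := mul_lt_measureReal_inter hBJ hJ'.measurableSet (fin hJpos) hJ'pos hBvol h3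
  have hreg' := hreg (A ∩ I') (B ∩ J') inter_subset_right inter_subset_right (hA.inter hI')
    (hB.inter hJ') hA'.le hB'.le
  have hA'pos : 0 < volume.real (A ∩ I') := (mul_pos hε'0 hI'pos).trans hA'
  have hB'pos : 0 < volume.real (B ∩ J') := (mul_pos hε'0 hJ'pos).trans hB'
  have hK : 0 < volume.real (I ∩ I') * volume.real (J ∩ J') := mul_pos
    (hA'pos.trans_le (measureReal_mono (inter_subset_inter_left _ hAI)
      (measure_ne_top_of_subset inter_subset_left (fin hIpos))))
    (hB'pos.trans_le (measureReal_mono (inter_subset_inter_left _ hBJ)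
      (measure_ne_top_of_subset inter_subset_left (fin hJpos))))
  set Δ := symmDiff (I ×ˢ J) (I' ×ˢ J')
  have hΔ : volume Δ ≠ ⊤ := measure_ne_top_of_subset symmDiff_subset_union
    (measure_union_ne_top (volume_prod_ne_top_s13 (fin hIpos) (fin hJpos))
      (volume_prod_ne_top_s13 (fin hI'pos) (fin hJ'pos)))
  have hIJΔ : I ×ˢ J \ I' ×ˢ J' ⊆ Δ := subset_union_left
  have hAB := abs_dBox_sub_dBox_inter_le hmeas hf hI'.measurableSet hJ'.measurableSet
    (measure_ne_top_of_subset hAI (fin hIpos)) (measure_ne_top_of_subset hBJ (fin hJpos))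
    (mul_pos hA'pos hB'pos) ((sdiff_subset_sdiff_left (prod_mono hAI hBJ)).trans hIJΔ) hΔ
  have hI'J' := abs_dBox_sub_dBox_inter_le (T := Δ) hmeas hf hI.measurableSet hJ.measurableSet
    (fin hI'pos) (fin hJ'pos) (by rwa [inter_comm I', inter_comm J']) subset_union_right hΔ
  rw [inter_comm I', inter_comm J'] at hI'J'
  have hIJ := abs_dBox_sub_dBox_inter_le hmeas hf hI'.measurableSet hJ'.measurableSet
    (fin hIpos) (fin hJpos) hK hIJΔ hΔ
  have hsum := nudge_error_le_of_subset hε0 hε'0 hAI hBJ hI'.measurableSet hJ'.measurableSet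
    hIpos hJpos (fin hI'pos) (fin hJ'pos) hAvol hBvol (measureReal_mono hIJΔ hΔ) h1
  linarith [abs_sub_le (dBox f A B) (dBox f (A ∩ I') (B ∩ J')) (dBox f I' J'),
    abs_sub_le (dBox f A B) (dBox f I' J') (dBox f (I ∩ I') (J ∩ J')),
    abs_sub_le (dBox f A B) (dBox f (I ∩ I') (J ∩ J')) (dBox f I J),
    abs_sub_comm (dBox f I J) (dBox f (I ∩ I') (J ∩ J'))]

/-- Interval regularity is robust under small perturbations of the pair of intervals. -/
theorem interval_regular_nudge (f : ℝ × ℝ → ℝ) (hmeas : Measurable f)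
    (hf : ∀ p, f p ∈ Set.Icc (0 : ℝ) 1)
    (I I' J J' : Set ℝ)
    (hI : I.OrdConnected) (hI' : I'.OrdConnected)
    (hJ : J.OrdConnected) (hJ' : J'.OrdConnected)
    (hIsub : I ⊆ Set.Icc 0 1) (hI'sub : I' ⊆ Set.Icc 0 1)
    (hJsub : J ⊆ Set.Icc 0 1) (hJ'sub : J' ⊆ Set.Icc 0 1)
    (hIpos : 0 < (volume I).toReal) (hI'pos : 0 < (volume I').toReal)
    (hJpos : 0 < (volume J).toReal) (hJ'pos : 0 < (volume J').toReal)
    (ε ε' : ℝ) (hε0 : 0 < ε) (hε1 : ε ≤ 1) (hε'0 : 0 < ε')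
    (h1 : ε' < ε - 4 * (volume (symmDiff (I ×ˢ J) (I' ×ˢ J'))).toReal /
      (ε ^ 2 * (volume I).toReal * (volume J).toReal))
    (h2 : ε' < ((volume I).toReal * ε - (volume (I \ I')).toReal) / (volume I').toReal)
    (h3 : ε' < ((volume J).toReal * ε - (volume (J \ J')).toReal) / (volume J').toReal)
    (hreg : IntervalRegularPair f ε' I' J') :
    IntervalRegularPair f ε I J :=
  interval_regular_nudge_general f hmeas hf I I' J J' hI hI' hJ hJ' hIpos hI'pos hJpos hJ'pos ε ε'
    hε0 hε'0 h1 h2 h3 hreg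
end

section
/- Frieze–Kannan weak regularity lemma: Let ε > 0. Every finite graph G on vertex set V has a vertex partition 𝒫 into at most 2^{2/ε²} parts that is ε-FK-regular, i.e., such that for all S, T ⊆ V, |e(S,T) − Σ_{i,j} d(V_i,V_j)·|S ∩ V_i|·|T ∩ V_j|| ≤ ε·|V|², where V₁,…,V_t are the parts of 𝒫. -/
open Finset

variable {V : Type*} [Fintype V] [DecidableEq V]

/-!
View the graph as the function `g = 1_{uv ∈ E}` on `V × V`; a partition `P` gives the step
function `P.stepFn g`, the average of `g` on each block `X × Y` of `P × P`, i.e. the orthogonal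
projection of `g` onto the functions constant on blocks. If `S × T` witnesses that `P` is not
ε-regular, refining `P` by `S` and `T` gives `Q` with at most `4 |P|` parts, and by Pythagoras and
Cauchy–Schwarz the energy `∑ (stepFn)²` grows by more than `ε² n²`. The energy never exceeds
`n²`, so starting from the trivial partition at most `1 / ε²` refinements occur, leaving at most
`4 ^ (1 / ε²) = 2 ^ (2 / ε²)` parts.
-/

section WeakRegularity

variable {g : V → V → ℝ}

noncomputable def blockAvg (g : V → V → ℝ) (X Y : Finset V) : ℝ :=
  (∑ u ∈ X, ∑ v ∈ Y, g u v) / (#X * #Y)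

omit [Fintype V] [DecidableEq V] in
lemma abs_blockAvg_le_one (hg : ∀ u v, |g u v| ≤ 1) (X Y : Finset V) :
    |blockAvg g X Y| ≤ 1 := by
  rw [blockAvg, abs_div]
  refine div_le_one_of_le₀ ?_ (abs_nonneg _)
  calc |∑ u ∈ X, ∑ v ∈ Y, g u v| ≤ ∑ u ∈ X, ∑ v ∈ Y, |g u v| :=
        (abs_sum_le_sum_abs _ _).trans (sum_le_sum fun u _ => abs_sum_le_sum_abs _ _)
    _ ≤ ∑ _u ∈ X, ∑ _v ∈ Y, (1 : ℝ) := by gcongr with u _ v _; exact hg u v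
    _ = |(#X * #Y : ℝ)| := by simp

omit [Fintype V] [DecidableEq V] in
lemma blockAvg_mul_card_mul_card {X Y : Finset V} (hX : X.Nonempty) (hY : Y.Nonempty) :
    blockAvg g X Y * (#X * #Y) = ∑ u ∈ X, ∑ v ∈ Y, g u v := by
  have := hX.card_pos
  have := hY.card_pos
  exact div_mul_cancel₀ _ (by positivity)

omit [DecidableEq V] in
lemma sq_sum_sum_le_card_sq_mul_sum_sum_sq (F : V → V → ℝ) (S T : Finset V) :
    (∑ u ∈ S, ∑ v ∈ T, F u v) ^ 2 ≤ Fintype.card V ^ 2 * ∑ u, ∑ v, F u v ^ 2 := by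
  rw [← sum_product', ← sum_product' univ univ]
  calc (∑ p ∈ S ×ˢ T, F p.1 p.2) ^ 2 ≤ #(S ×ˢ T) * ∑ p ∈ S ×ˢ T, F p.1 p.2 ^ 2 :=
        sq_sum_le_card_mul_sum_sq
    _ ≤ (Fintype.card (V × V) : ℝ) * ∑ p ∈ univ ×ˢ univ, F p.1 p.2 ^ 2 :=
        mul_le_mul (by exact_mod_cast card_le_univ _)
          (sum_le_sum_of_subset_of_nonneg (subset_univ _) fun _ _ _ => sq_nonneg _)
          (sum_nonneg fun _ _ => sq_nonneg _) (Nat.cast_nonneg _)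
    _ = Fintype.card V ^ 2 * ∑ p ∈ univ ×ˢ univ, F p.1 p.2 ^ 2 := by
        rw [Fintype.card_prod]; push_cast; ring

namespace Finpartition

lemma card_parts_inf_le {α : Type*} [DistribLattice α] [OrderBot α] [DecidableEq α] {a : α}
    (P R : Finpartition a) : #(P ⊓ R).parts ≤ #P.parts * #R.parts :=
  card_erase_le.trans (card_image_le.trans (card_product _ _).le)

def Splits {s : Finset V} (P : Finpartition s) (S : Finset V) : Prop :=
  ∀ X ∈ P.parts, X ⊆ S ∨ Disjoint X S

omit [Fintype V] in
lemma splits_of_mem_parts {s X : Finset V} {P : Finpartition s} (hX : X ∈ P.parts) :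
    P.Splits X := fun Y hY => by
  by_cases h : Y = X
  · exact .inl h.le
  · exact .inr (P.disjoint hY hX h)

omit [Fintype V] in
lemma Splits.mono {s S : Finset V} {P Q : Finpartition s} (hQP : Q ≤ P) (h : P.Splits S) :
    Q.Splits S := fun X hX => by
  obtain ⟨Y, hY, hXY⟩ := hQP hX
  exact (h Y hY).imp hXY.trans (Disjoint.mono_left hXY)

omit [Fintype V] in
lemma splits_atomise {s S : Finset V} {F : Finset (Finset V)} (hS : S ∈ F) :
    (atomise s F).Splits S := fun X hX => by
  obtain ⟨-, A, -, rfl⟩ := mem_atomise.1 hX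
  by_cases hSA : S ∈ A
  · refine .inl fun u hu => ?_
    simp only [mem_filter] at hu
    exact (hu.2 S hS).1 hSA
  · refine .inr (disjoint_left.2 fun u hu huS => ?_)
    simp only [mem_filter] at hu
    exact hSA ((hu.2 S hS).2 huS)

lemma exists_le_splits_splits (P : Finpartition (univ : Finset V)) (S T : Finset V) :
    ∃ Q : Finpartition (univ : Finset V),
      Q ≤ P ∧ #Q.parts ≤ 4 * #P.parts ∧ Q.Splits S ∧ Q.Splits T := by
  have hcard : #(atomise univ {S, T}).parts ≤ 4 :=
    card_atomise_le.trans (Nat.pow_le_pow_right two_pos card_le_two)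
  refine ⟨P ⊓ atomise univ {S, T}, inf_le_left, ?_,
    (splits_atomise (by simp)).mono inf_le_right, (splits_atomise (by simp)).mono inf_le_right⟩
  calc #(P ⊓ atomise univ {S, T}).parts ≤ #P.parts * 4 :=
        (card_parts_inf_le _ _).trans (Nat.mul_le_mul_left _ hcard)
    _ = 4 * #P.parts := mul_comm _ _

variable (P : Finpartition (univ : Finset V)) {Q : Finpartition (univ : Finset V)}

lemma sum_parts_sum_inter {M : Type*} [AddCommMonoid M] (S : Finset V) (F : V → M) :
    ∑ X ∈ P.parts, ∑ u ∈ X ∩ S, F u = ∑ u ∈ S, F u := by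
  have hdisj : (P.parts : Set (Finset V)).PairwiseDisjoint (· ∩ S) := fun X hX Y hY hXY =>
    (P.disjoint hX hY hXY).mono inter_subset_left inter_subset_left
  rw [← sum_biUnion hdisj]
  congr 1
  ext u
  simp only [mem_biUnion, mem_inter]
  exact ⟨fun ⟨_, _, _, hu⟩ => hu,
    fun hu => ⟨_, P.part_mem.2 (mem_univ u), P.mem_part (mem_univ u), hu⟩⟩

lemma sum_sum_eq_sum_parts {M : Type*} [AddCommMonoid M] (S T : Finset V) (F : V → V → M) :
    ∑ u ∈ S, ∑ v ∈ T, F u v =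
      ∑ X ∈ P.parts, ∑ Y ∈ P.parts, ∑ u ∈ X ∩ S, ∑ v ∈ Y ∩ T, F u v := by
  simp_rw [← P.sum_parts_sum_inter S, ← P.sum_parts_sum_inter T (F _)]
  exact sum_congr rfl fun X _ => sum_comm

noncomputable def stepFn (g : V → V → ℝ) (u v : V) : ℝ :=
  blockAvg g (P.part u) (P.part v)

noncomputable def stepEnergy (g : V → V → ℝ) : ℝ :=
  ∑ u, ∑ v, P.stepFn g u v ^ 2

def IsFKRegular (g : V → V → ℝ) (ε : ℝ) : Prop :=
  ∀ S T : Finset V,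
    |∑ u ∈ S, ∑ v ∈ T, (g u v - P.stepFn g u v)| ≤ ε * Fintype.card V ^ 2

lemma stepFn_eq_of_mem {X Y : Finset V} (hX : X ∈ P.parts) (hY : Y ∈ P.parts) {u v : V}
    (hu : u ∈ X) (hv : v ∈ Y) : P.stepFn g u v = blockAvg g X Y := by
  rw [stepFn, P.part_eq_of_mem hX hu, P.part_eq_of_mem hY hv]

lemma sum_sum_stepFn_of_mem_parts {X Y : Finset V} (hX : X ∈ P.parts) (hY : Y ∈ P.parts) :
    ∑ u ∈ X, ∑ v ∈ Y, P.stepFn g u v = ∑ u ∈ X, ∑ v ∈ Y, g u v := by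
  rw [sum_congr rfl fun u hu => sum_congr rfl fun v hv => P.stepFn_eq_of_mem hX hY hu hv,
    ← blockAvg_mul_card_mul_card (g := g) (P.nonempty_of_mem_parts hX)
      (P.nonempty_of_mem_parts hY)]
  simp only [sum_const, nsmul_eq_mul]
  ring

lemma sum_sum_stepFn_of_splits {S T : Finset V} (hS : P.Splits S) (hT : P.Splits T) :
    ∑ u ∈ S, ∑ v ∈ T, P.stepFn g u v = ∑ u ∈ S, ∑ v ∈ T, g u v := by
  rw [P.sum_sum_eq_sum_parts S T, P.sum_sum_eq_sum_parts S T]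
  refine sum_congr rfl fun X hX => sum_congr rfl fun Y hY => ?_
  rcases hS X hX with hXS | hXS
  · rcases hT Y hY with hYT | hYT
    · rw [inter_eq_left.2 hXS, inter_eq_left.2 hYT, P.sum_sum_stepFn_of_mem_parts hX hY]
    · simp [disjoint_iff_inter_eq_empty.1 hYT]
  · simp [disjoint_iff_inter_eq_empty.1 hXS]

lemma sum_sum_stepFn_mul_stepFn_of_le (hQP : Q ≤ P) :
    ∑ u, ∑ v, Q.stepFn g u v * P.stepFn g u v = P.stepEnergy g := by
  have block : ∀ R ≤ P, ∀ X ∈ P.parts, ∀ Y ∈ P.parts,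
      ∑ u ∈ X, ∑ v ∈ Y, R.stepFn g u v * P.stepFn g u v =
        (∑ u ∈ X, ∑ v ∈ Y, g u v) * blockAvg g X Y := by
    intro R hRP X hX Y hY
    rw [← R.sum_sum_stepFn_of_splits (g := g) ((splits_of_mem_parts hX).mono hRP)
      ((splits_of_mem_parts hY).mono hRP), sum_mul]
    exact sum_congr rfl fun u hu => by
      rw [sum_mul]
      exact sum_congr rfl fun v hv => by rw [P.stepFn_eq_of_mem hX hY hu hv]
  rw [stepEnergy, P.sum_sum_eq_sum_parts, P.sum_sum_eq_sum_parts]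
  simp only [inter_univ, sq]
  exact sum_congr rfl fun X hX => sum_congr rfl fun Y hY => by
    rw [block Q hQP X hX Y hY, block P le_rfl X hX Y hY]

lemma sum_sum_sq_stepFn_sub_stepFn (hQP : Q ≤ P) :
    ∑ u, ∑ v, (Q.stepFn g u v - P.stepFn g u v) ^ 2 = Q.stepEnergy g - P.stepEnergy g := by
  have hcross := P.sum_sum_stepFn_mul_stepFn_of_le (g := g) hQP
  simp only [stepEnergy, sub_sq, sum_add_distrib, sum_sub_distrib, mul_assoc, ← mul_sum]
    at hcross ⊢
  rw [hcross]
  ring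

lemma stepEnergy_nonneg : 0 ≤ P.stepEnergy g := by
  unfold stepEnergy
  positivity

lemma stepEnergy_le (hg : ∀ u v, |g u v| ≤ 1) : P.stepEnergy g ≤ Fintype.card V ^ 2 := by
  calc P.stepEnergy g ≤ ∑ _u : V, ∑ _v : V, (1 : ℝ) :=
        sum_le_sum fun u _ => sum_le_sum fun v _ =>
          sq_le_one_iff_abs_le_one _ |>.2 (abs_blockAvg_le_one hg _ _)
    _ = (Fintype.card V : ℝ) ^ 2 := by simp [sq]

lemma sq_sum_sum_sub_stepFn_le (hQP : Q ≤ P) {S T : Finset V} (hS : Q.Splits S)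
    (hT : Q.Splits T) :
    (∑ u ∈ S, ∑ v ∈ T, (g u v - P.stepFn g u v)) ^ 2 ≤
      Fintype.card V ^ 2 * (Q.stepEnergy g - P.stepEnergy g) := by
  have hsplit : ∑ u ∈ S, ∑ v ∈ T, (g u v - P.stepFn g u v) =
      ∑ u ∈ S, ∑ v ∈ T, (Q.stepFn g u v - P.stepFn g u v) := by
    simp only [sum_sub_distrib, Q.sum_sum_stepFn_of_splits hS hT]
  rw [hsplit, ← P.sum_sum_sq_stepFn_sub_stepFn hQP]
  exact sq_sum_sum_le_card_sq_mul_sum_sum_sq _ S T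

lemma exists_stepEnergy_add_lt {ε : ℝ} (hε : 0 ≤ ε) (h : ¬ P.IsFKRegular g ε) :
    ∃ Q : Finpartition (univ : Finset V), #Q.parts ≤ 4 * #P.parts ∧
      P.stepEnergy g + ε ^ 2 * Fintype.card V ^ 2 < Q.stepEnergy g := by
  simp only [IsFKRegular, not_forall, not_le] at h
  obtain ⟨S, T, hST⟩ := h
  obtain ⟨Q, hQP, hcard, hS, hT⟩ := P.exists_le_splits_splits S T
  refine ⟨Q, hcard, ?_⟩
  set n : ℝ := (Fintype.card V : ℝ)
  set D := ∑ u ∈ S, ∑ v ∈ T, (g u v - P.stepFn g u v)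
  have hD : (ε * n ^ 2) ^ 2 < D ^ 2 := by
    rw [← sq_abs D]
    exact pow_lt_pow_left₀ hST (by positivity) two_ne_zero
  have hgain : n ^ 2 * (ε ^ 2 * n ^ 2) < n ^ 2 * (Q.stepEnergy g - P.stepEnergy g) :=
    calc n ^ 2 * (ε ^ 2 * n ^ 2) = (ε * n ^ 2) ^ 2 := by ring
      _ < D ^ 2 := hD
      _ ≤ _ := P.sq_sum_sum_sub_stepFn_le hQP hS hT
  linarith [lt_of_mul_lt_mul_left hgain (sq_nonneg n)]

end Finpartition

open Finpartition

lemma exists_isFKRegular_or_le_stepEnergy {ε : ℝ} (hε : 0 ≤ ε) (k : ℕ) :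
    ∃ P : Finpartition (univ : Finset V), #P.parts ≤ 4 ^ k ∧
      (P.IsFKRegular g ε ∨ k * (ε ^ 2 * Fintype.card V ^ 2) ≤ P.stepEnergy g) := by
  induction k with
  | zero =>
    refine ⟨⊤, (card_le_card (parts_top_subset _)).trans (card_singleton _).le, .inr ?_⟩
    simpa using stepEnergy_nonneg ⊤
  | succ k ih =>
    obtain ⟨P, hcard, hP⟩ := ih
    have hcard4 : 4 * #P.parts ≤ 4 ^ (k + 1) := by rw [pow_succ']; omega
    by_cases hreg : P.IsFKRegular g ε
    · exact ⟨P, by omega, .inl hreg⟩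
    obtain ⟨Q, hQcard, hQ⟩ := P.exists_stepEnergy_add_lt hε hreg
    refine ⟨Q, hQcard.trans hcard4, .inr ?_⟩
    push_cast
    linarith [hP.resolve_left hreg]

theorem exists_isFKRegular (hg : ∀ u v, |g u v| ≤ 1) {ε : ℝ} (hε : 0 ≤ ε) (K : ℕ)
    (hK : 1 ≤ (K + 1) * ε ^ 2) :
    ∃ P : Finpartition (univ : Finset V), #P.parts ≤ 4 ^ K ∧ P.IsFKRegular g ε := by
  obtain ⟨P, hcard, hP⟩ := exists_isFKRegular_or_le_stepEnergy (g := g) hε K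
  refine ⟨P, hcard, ?_⟩
  by_contra hreg
  obtain ⟨Q, -, hQ⟩ := P.exists_stepEnergy_add_lt hε hreg
  have := mul_le_mul_of_nonneg_right hK (sq_nonneg (Fintype.card V : ℝ))
  linarith [hP.resolve_left hreg, Q.stepEnergy_le hg]

lemma sum_parts_blockAvg_mul_card_inter (P : Finpartition (univ : Finset V)) (S T : Finset V) :
    ∑ X ∈ P.parts, ∑ Y ∈ P.parts, blockAvg g X Y * #(S ∩ X) * #(T ∩ Y) =
      ∑ u ∈ S, ∑ v ∈ T, P.stepFn g u v := by
  rw [P.sum_sum_eq_sum_parts S T]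
  refine sum_congr rfl fun X hX => sum_congr rfl fun Y hY => ?_
  rw [sum_congr rfl fun u hu => sum_congr rfl fun v hv =>
    P.stepFn_eq_of_mem hX hY (mem_of_mem_inter_left hu) (mem_of_mem_inter_left hv)]
  simp only [sum_const, nsmul_eq_mul, inter_comm S X, inter_comm T Y]
  ring

end WeakRegularity

lemma four_pow_natFloor_le_two_rpow {x : ℝ} (hx : 0 ≤ x) :
    (4 : ℝ) ^ ⌊x⌋₊ ≤ 2 ^ (2 * x) :=
  calc (4 : ℝ) ^ ⌊x⌋₊ = 2 ^ (2 * (⌊x⌋₊ : ℝ)) := by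
        rw [Real.rpow_mul zero_le_two, Real.rpow_two, Real.rpow_natCast]
        norm_num
    _ ≤ 2 ^ (2 * x) :=
        Real.rpow_le_rpow_of_exponent_le one_le_two (by gcongr; exact Nat.floor_le hx)

omit [Fintype V] [DecidableEq V] in
lemma epairs_eq_sum_sum_adjMatrix (G : SimpleGraph V) [DecidableRel G.Adj] (S T : Finset V) :
    (epairs G S T : ℝ) = ∑ u ∈ S, ∑ v ∈ T, G.adjMatrix ℝ u v := by
  rw [epairs, card_filter]
  push_cast
  rw [sum_product]
  simp only [SimpleGraph.adjMatrix_apply]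

omit [Fintype V] [DecidableEq V] in
lemma dens_eq_blockAvg (G : SimpleGraph V) [DecidableRel G.Adj] :
    _root_.dens G = blockAvg fun u v => G.adjMatrix ℝ u v := by
  funext X Y
  rw [_root_.dens, blockAvg, epairs_eq_sum_sum_adjMatrix]

/-- Frieze–Kannan weak regularity lemma: every graph has a vertex partition into at most
`2^(2/ε²)` parts such that for all `S, T ⊆ V`,
`|e(S,T) - ∑_{i,j} d(Vᵢ,Vⱼ) |S ∩ Vᵢ| |T ∩ Vⱼ|| ≤ ε |V|²`. -/
theorem frieze_kannan_weak_regularity (G : SimpleGraph V) [DecidableRel G.Adj]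
    (ε : ℝ) (hε : 0 < ε) :
    ∃ P : Finpartition (univ : Finset V),
      (P.parts.card : ℝ) ≤ 2 ^ ((2 : ℝ) / ε ^ 2) ∧
      ∀ S T : Finset V,
        |(epairs G S T : ℝ) -
            ∑ X ∈ P.parts, ∑ Y ∈ P.parts, dens G X Y * ((S ∩ X).card : ℝ) * ((T ∩ Y).card : ℝ)| ≤
          ε * (Fintype.card V : ℝ) ^ 2 := by
  set K := ⌊1 / ε ^ 2⌋₊
  have hK : 1 ≤ (K + 1) * ε ^ 2 := by
    have := Nat.lt_floor_add_one (1 / ε ^ 2)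
    rw [div_lt_iff₀ (by positivity)] at this
    exact this.le
  have hadj : ∀ u v, |G.adjMatrix ℝ u v| ≤ 1 := fun u v => by
    by_cases h : G.Adj u v <;> simp [h]
  obtain ⟨P, hcard, hP⟩ := exists_isFKRegular hadj hε.le K hK
  refine ⟨P, ?_, fun S T => ?_⟩
  · calc (#P.parts : ℝ) ≤ 4 ^ K := by exact_mod_cast hcard
      _ ≤ 2 ^ (2 * (1 / ε ^ 2)) := four_pow_natFloor_le_two_rpow (by positivity)
      _ = 2 ^ (2 / ε ^ 2) := by rw [mul_one_div]
  · rw [dens_eq_blockAvg, sum_parts_blockAvg_mul_card_inter, epairs_eq_sum_sum_adjMatrix]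
    simpa only [sum_sub_distrib] using hP S T
end
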